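/- arXiv:math/0508371 — 7 statements merged into one kernel-verified Lean document; each statement's English description precedes it below -/
import Mathlib

section
/- Let ξ be a real random variable with 1 + ξ > 0 a.s. For θ ∈ [0, 1], one has (1+ξ)^θ ≤ 2 + ξ pointwise. Consequently, if K > 0 satisfies E[(2+ξ) ln²(1+ξ)] ≤ K |E ln(1+ξ)| and 0 < α < min(1/K, 1), then α·E[ln(1+ξ)] ≤ E[(1+ξ)^α] − 1 ≤ α·(E[ln(1+ξ)] + |E ln(1+ξ)|/2). -/
/-!
Write `(1+ξ)^α = exp (α ln (1+ξ))`. Convexity of `exp` gives `(1+ξ)^α ≥ 1 + α ln (1+ξ)`, and Taylor's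
theorem with Lagrange remainder gives `(1+ξ)^α = 1 + α ln (1+ξ) + (α²/2) ln²(1+ξ) (1+ξ)^θ` for some
`θ ∈ [0, α]`, where `(1+ξ)^θ ≤ 2 + ξ`. Taking expectations, the quadratic term is at most
`(α²/2) K |E ln (1+ξ)| ≤ (α/2) |E ln (1+ξ)|` because `α K < 1`.
-/

open Set MeasureTheory

namespace Real

theorem exists_mem_uIcc_exp_eq (t : ℝ) :
    ∃ s ∈ uIcc 0 t, exp t = 1 + t + exp s * t ^ 2 / 2 := by
  rcases eq_or_ne t 0 with rfl | ht
  · exact ⟨0, by simp⟩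
  obtain ⟨s, hs, h⟩ :=
    taylor_mean_remainder_lagrange_iteratedDeriv (n := 1) ht.symm contDiff_exp.contDiffOn
  have hderiv : iteratedDerivWithin 1 exp (uIcc 0 t) 0 = 1 := by
    rw [iteratedDerivWithin_eq_iteratedDeriv (uniqueDiffOn_uIcc ht.symm)
      contDiff_exp.contDiffAt left_mem_uIcc]
    simp
  simp only [taylorWithinEval_succ, taylor_within_zero_eval, hderiv, iteratedDeriv_eq_iterate,
    iter_deriv_exp] at h
  norm_num at h
  exact ⟨s, uIoo_subset_uIcc_self hs, by linarith⟩

theorem exists_mem_uIcc_rpow_eq {x : ℝ} (hx : 0 < x) (α : ℝ) :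
    ∃ θ ∈ uIcc 0 α, x ^ α = 1 + α * log x + α ^ 2 / 2 * (x ^ θ * log x ^ 2) := by
  rcases eq_or_ne (log x) 0 with hlog | hlog
  · have hx1 : x = 1 := eq_one_of_pos_of_log_eq_zero hx hlog
    exact ⟨0, left_mem_uIcc, by simp [hx1]⟩
  obtain ⟨s, hs, h⟩ := exists_mem_uIcc_exp_eq (α * log x)
  have hθ : s / log x ∈ uIcc 0 α := by
    have := mem_image_of_mem (· / log x) hs
    rwa [image_div_const_uIcc, zero_div, mul_div_cancel_right₀ α hlog] at this
  refine ⟨s / log x, hθ, ?_⟩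
  rw [rpow_def_of_pos hx, rpow_def_of_pos hx, mul_div_cancel₀ s hlog, mul_comm (log x) α, h]
  ring

theorem rpow_le_one_add {x θ : ℝ} (hx : 0 ≤ x) (h0 : 0 ≤ θ) (h1 : θ ≤ 1) : x ^ θ ≤ 1 + x := by
  rcases le_or_gt 1 x with hx1 | hx1
  · calc x ^ θ ≤ x ^ (1 : ℝ) := rpow_le_rpow_of_exponent_le hx1 h1
      _ ≤ 1 + x := by rw [rpow_one]; linarith
  · linarith [rpow_le_one hx hx1.le h0]

theorem one_add_mul_log_le_rpow {x : ℝ} (hx : 0 < x) (α : ℝ) : 1 + α * log x ≤ x ^ α := by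
  rw [rpow_def_of_pos hx, mul_comm (log x) α, add_comm]
  exact add_one_le_exp _

theorem rpow_le_one_add_mul_log_add {x α : ℝ} (hx : 0 < x) (h0 : 0 ≤ α) (h1 : α ≤ 1) :
    x ^ α ≤ 1 + α * log x + α ^ 2 / 2 * ((1 + x) * log x ^ 2) := by
  obtain ⟨θ, hθ, h⟩ := exists_mem_uIcc_rpow_eq hx α
  rw [uIcc_of_le h0] at hθ
  rw [h]
  gcongr
  exact rpow_le_one_add hx.le hθ.1 (hθ.2.trans h1)

end Real

section Moments

variable {Ω : Type*} [MeasurableSpace Ω] {μ : Measure Ω} [IsProbabilityMeasure μ]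
  {X : Ω → ℝ} {α : ℝ}

theorem one_add_mul_integral_log_le_integral_rpow (hX : ∀ᵐ ω ∂μ, 0 < X ω)
    (hlog : Integrable (fun ω => Real.log (X ω)) μ) (hrpow : Integrable (fun ω => X ω ^ α) μ) :
    1 + α * ∫ ω, Real.log (X ω) ∂μ ≤ ∫ ω, X ω ^ α ∂μ := by
  have hlin : Integrable (fun ω => 1 + α * Real.log (X ω)) μ :=
    (integrable_const 1).add (hlog.const_mul α)
  calc 1 + α * ∫ ω, Real.log (X ω) ∂μ = ∫ ω, 1 + α * Real.log (X ω) ∂μ := by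
        rw [integral_add (integrable_const 1) (hlog.const_mul α), integral_const_mul]
        simp
    _ ≤ ∫ ω, X ω ^ α ∂μ :=
        integral_mono_ae hlin hrpow (hX.mono fun ω hω => Real.one_add_mul_log_le_rpow hω α)

theorem integral_rpow_le_one_add_mul_integral_log_add (hX : ∀ᵐ ω ∂μ, 0 < X ω)
    (h0 : 0 ≤ α) (h1 : α ≤ 1) (hlog : Integrable (fun ω => Real.log (X ω)) μ)
    (hlog2 : Integrable (fun ω => (1 + X ω) * Real.log (X ω) ^ 2) μ)
    (hrpow : Integrable (fun ω => X ω ^ α) μ) :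
    ∫ ω, X ω ^ α ∂μ ≤ 1 + α * ∫ ω, Real.log (X ω) ∂μ +
      α ^ 2 / 2 * ∫ ω, (1 + X ω) * Real.log (X ω) ^ 2 ∂μ := by
  have hlin : Integrable (fun ω => 1 + α * Real.log (X ω)) μ :=
    (integrable_const 1).add (hlog.const_mul α)
  calc ∫ ω, X ω ^ α ∂μ
      ≤ ∫ ω, 1 + α * Real.log (X ω) + α ^ 2 / 2 * ((1 + X ω) * Real.log (X ω) ^ 2) ∂μ :=
        integral_mono_ae hrpow (hlin.add (hlog2.const_mul _))
          (hX.mono fun ω hω => Real.rpow_le_one_add_mul_log_add hω h0 h1)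
    _ = _ := by
        rw [integral_add hlin (hlog2.const_mul _), integral_add (integrable_const 1)
          (hlog.const_mul α), integral_const_mul, integral_const_mul]
        simp

end Moments

theorem uniform_bound_rpow_moment_general
    {Ω : Type*} [MeasurableSpace Ω] (μ : Measure Ω) [IsProbabilityMeasure μ]
    (ξ : Ω → ℝ)
    (hpos : ∀ᵐ ω ∂μ, 0 < 1 + ξ ω)
    (hint_log : Integrable (fun ω => Real.log (1 + ξ ω)) μ)
    (hint_log2 : Integrable (fun ω => (2 + ξ ω) * Real.log (1 + ξ ω) ^ 2) μ) :
    (∀ θ : ℝ, 0 ≤ θ → θ ≤ 1 → ∀ᵐ ω ∂μ, (1 + ξ ω) ^ θ ≤ 2 + ξ ω) ∧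
      ∀ K : ℝ, 0 < K →
        (∫ ω, (2 + ξ ω) * Real.log (1 + ξ ω) ^ 2 ∂μ ≤
          K * |∫ ω, Real.log (1 + ξ ω) ∂μ|) →
        ∀ α : ℝ, 0 < α → α < min (1 / K) 1 →
          (Integrable (fun ω => (1 + ξ ω) ^ α) μ) →
          α * ∫ ω, Real.log (1 + ξ ω) ∂μ ≤ (∫ ω, (1 + ξ ω) ^ α ∂μ) - 1 ∧
          (∫ ω, (1 + ξ ω) ^ α ∂μ) - 1 ≤
            α * ((∫ ω, Real.log (1 + ξ ω) ∂μ) +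
              |∫ ω, Real.log (1 + ξ ω) ∂μ| / 2) := by
  have hshift : ∀ ω, 1 + (1 + ξ ω) = 2 + ξ ω := fun ω => by ring
  refine ⟨fun θ h0 h1 => hpos.mono fun ω hω => ?_, fun K hK hQ α hα hαmin hrpow => ?_⟩
  · simpa only [hshift] using Real.rpow_le_one_add hω.le h0 h1
  have hα1 : α < 1 := hαmin.trans_le (min_le_right _ _)
  have hαK : α * K < 1 := (lt_div_iff₀ hK).1 (hαmin.trans_le (min_le_left _ _))
  have hlower := one_add_mul_integral_log_le_integral_rpow hpos hint_log hrpow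
  have hupper := integral_rpow_le_one_add_mul_integral_log_add hpos hα.le hα1.le hint_log
    (by simpa only [hshift] using hint_log2) hrpow
  simp only [hshift] at hupper
  set L := ∫ ω, Real.log (1 + ξ ω) ∂μ
  have hquad : α ^ 2 / 2 * ∫ ω, (2 + ξ ω) * Real.log (1 + ξ ω) ^ 2 ∂μ ≤ α * (|L| / 2) :=
    calc _ ≤ α ^ 2 / 2 * (K * |L|) := by gcongr
      _ = α * (α * K) * (|L| / 2) := by ring
      _ ≤ α * 1 * (|L| / 2) := by gcongr
      _ = α * (|L| / 2) := by ring
  constructor <;> linarith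

theorem uniform_bound_rpow_moment
    {Ω : Type*} [MeasurableSpace Ω] (μ : Measure Ω) [IsProbabilityMeasure μ]
    (ξ : Ω → ℝ) (hmeas : Measurable ξ)
    (hpos : ∀ᵐ ω ∂μ, 0 < 1 + ξ ω)
    (hint_log : Integrable (fun ω => Real.log (1 + ξ ω)) μ)
    (hint_log2 : Integrable (fun ω => (2 + ξ ω) * Real.log (1 + ξ ω) ^ 2) μ) :
    (∀ θ : ℝ, 0 ≤ θ → θ ≤ 1 → ∀ᵐ ω ∂μ, (1 + ξ ω) ^ θ ≤ 2 + ξ ω) ∧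
      ∀ K : ℝ, 0 < K →
        (∫ ω, (2 + ξ ω) * Real.log (1 + ξ ω) ^ 2 ∂μ ≤
          K * |∫ ω, Real.log (1 + ξ ω) ∂μ|) →
        ∀ α : ℝ, 0 < α → α < min (1 / K) 1 →
          (Integrable (fun ω => (1 + ξ ω) ^ α) μ) →
          α * ∫ ω, Real.log (1 + ξ ω) ∂μ ≤ (∫ ω, (1 + ξ ω) ^ α ∂μ) - 1 ∧
          (∫ ω, (1 + ξ ω) ^ α ∂μ) - 1 ≤
            α * ((∫ ω, Real.log (1 + ξ ω) ∂μ) +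
              |∫ ω, Real.log (1 + ξ ω) ∂μ| / 2) :=
  uniform_bound_rpow_moment_general μ ξ hpos hint_log hint_log2
end

section
/- Let x₀ > 0 and x_{n+1} = x_n(1 + f(x_n) a_n) + S_n, where S_n ≥ 0, f: ℝ → [0,1] is continuous with f(0) = 0 and inf_{u > c} u f(u) > 0 for every c > 0, the coefficients satisfy −1 < a_n < 0 with Σ a_n = −∞, and S_n / a_n → 0. Then x_n → 0. -/
open Filter Finset

/-!
Fix `ε > 0` and let `m > 0` be the infimum of `u f(u)` over `u > ε`. Eventually
`S n ≤ (m / 2) |a n|`, so every step taken from above `ε` lowers `x` by at least `(m / 2) |a n|`;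
since `∑ a n = -∞` and `x > 0`, the sequence must drop to `ε` or below. From there a step adds
at most `S n ≤ ε`, while steps from above `ε` go down, so `x` stays below `2ε` forever.
-/

section Drift

variable {x a : ℕ → ℝ} {c ε δ : ℝ}

theorem exists_le_of_drift (hx : ∀ n, 0 ≤ x n) (hc : 0 < c)
    (ha : Tendsto (fun n => ∑ i ∈ range n, a i) atTop atBot) {N : ℕ}
    (hdrift : ∀ n ≥ N, ε < x n → x (n + 1) ≤ x n + c * a n) :
    ∃ n ≥ N, x n ≤ ε := by
  by_contra! hbig
  have hbound : ∀ n ≥ N,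
      x n ≤ x N - c * ∑ i ∈ range N, a i + c * ∑ i ∈ range n, a i := by
    intro n hn
    induction n, hn using Nat.le_induction with
    | base => simp
    | succ n hn ih =>
      rw [sum_range_succ, mul_add]
      linarith [hdrift n hn (hbig n hn)]
  have hdiv : Tendsto (fun n => x N - c * ∑ i ∈ range N, a i + c * ∑ i ∈ range n, a i)
      atTop atBot :=
    tendsto_atBot_add_const_left _ _ (ha.const_mul_atBot hc)
  obtain ⟨n, hn, hneg⟩ := ((eventually_ge_atTop N).and (hdiv.eventually_lt_atBot 0)).exists
  linarith [hbound n hn, hx n]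

theorem le_of_trap {n₀ : ℕ} (h₀ : x n₀ ≤ ε) (hεδ : ε ≤ δ)
    (hlow : ∀ n ≥ n₀, x n ≤ ε → x (n + 1) ≤ δ)
    (hhigh : ∀ n ≥ n₀, ε < x n → x (n + 1) ≤ x n) :
    ∀ n ≥ n₀, x n ≤ δ := by
  intro n hn
  induction n, hn using Nat.le_induction with
  | base => exact h₀.trans hεδ
  | succ n hn ih =>
    rcases le_or_gt (x n) ε with hle | hgt
    · exact hlow n hn hle
    · exact (hhigh n hn hgt).trans ih

theorem eventually_le_of_drift (hx : ∀ n, 0 ≤ x n) (hc : 0 < c) (ha_nonpos : ∀ n, a n ≤ 0)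
    (ha : Tendsto (fun n => ∑ i ∈ range n, a i) atTop atBot) (hεδ : ε ≤ δ)
    (hstep : ∀ᶠ n in atTop,
      (ε < x n → x (n + 1) ≤ x n + c * a n) ∧ (x n ≤ ε → x (n + 1) ≤ δ)) :
    ∀ᶠ n in atTop, x n ≤ δ := by
  obtain ⟨N, hN⟩ := eventually_atTop.1 hstep
  obtain ⟨n₀, hn₀, hxn₀⟩ := exists_le_of_drift hx hc ha fun n hn => (hN n hn).1
  refine eventually_atTop.2 ⟨n₀, le_of_trap hxn₀ hεδ (fun n hn => (hN n (hn₀.trans hn)).2)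
    fun n hn hgt => ?_⟩
  have := mul_nonpos_of_nonneg_of_nonpos hc.le (ha_nonpos n)
  linarith [(hN n (hn₀.trans hn)).1 hgt]

end Drift

section Step

variable {x t a S : ℝ}

theorem step_pos (hx : 0 < x) (ht : t ≤ 1) (ha_lb : -1 < a) (ha_ub : a ≤ 0) (hS : 0 ≤ S) :
    0 < x * (1 + t * a) + S := by
  have : 0 < 1 + t * a := by nlinarith
  positivity

theorem step_le_add (hx : 0 ≤ x) (ht : 0 ≤ t) (ha : a ≤ 0) :
    x * (1 + t * a) + S ≤ x + S := by
  nlinarith [mul_nonneg hx ht]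

theorem step_le_of_le_mul {m : ℝ} (hm : m ≤ x * t) (ha : a ≤ 0) (hS : S ≤ m / 2 * -a) :
    x * (1 + t * a) + S ≤ x + m / 2 * a := by
  nlinarith

end Step

theorem eventually_le_mul_neg_of_tendsto_div {a S : ℕ → ℝ} {c : ℝ} (ha : ∀ n, a n < 0)
    (h : Tendsto (fun n => S n / a n) atTop (nhds 0)) (hc : 0 < c) :
    ∀ᶠ n in atTop, S n ≤ c * -a n := by
  filter_upwards [h.eventually (lt_mem_nhds (neg_neg_of_pos hc))] with n hn
  rw [lt_div_iff_of_neg (ha n)] at hn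
  linarith

theorem deterministic_stability_general
    (f : ℝ → ℝ) (hf_range : ∀ u, f u ∈ Set.Icc (0 : ℝ) 1)
    (hf_inf : ∀ c : ℝ, 0 < c → 0 < sInf ((fun u => u * f u) '' Set.Ioi c))
    (a S x : ℕ → ℝ)
    (ha_lb : ∀ n, -1 < a n) (ha_ub : ∀ n, a n < 0)
    (ha_sum : Tendsto (fun N => ∑ n ∈ Finset.range N, a n) atTop atBot)
    (hS : ∀ n, 0 ≤ S n)
    (hratio : Tendsto (fun n => S n / a n) atTop (nhds 0))
    (hx0 : 0 < x 0)
    (hrec : ∀ n, x (n + 1) = x n * (1 + f (x n) * a n) + S n) :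
    Tendsto x atTop (nhds 0) := by
  have hpos : ∀ n, 0 < x n := fun n => Nat.rec hx0 (fun n ih => (hrec n).symm ▸
    step_pos ih (hf_range _).2 (ha_lb n) (ha_ub n).le (hS n)) n
  have hsmall : ∀ ε > 0, ∀ᶠ n in atTop, x n ≤ 2 * ε := by
    intro ε hε
    set m := sInf ((fun u => u * f u) '' Set.Ioi ε)
    have hm : ∀ u, ε < u → m ≤ u * f u := fun u hu => csInf_le
      ⟨0, by rintro _ ⟨v, hv, rfl⟩; exact mul_nonneg (hε.trans hv).le (hf_range v).1⟩ ⟨u, hu, rfl⟩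
    have hm2 : 0 < m / 2 := half_pos (hf_inf ε hε)
    refine eventually_le_of_drift (fun n => (hpos n).le) hm2 (fun n => (ha_ub n).le) ha_sum
      (by linarith : ε ≤ 2 * ε) ?_
    filter_upwards [eventually_le_mul_neg_of_tendsto_div ha_ub hratio hm2,
      eventually_le_mul_neg_of_tendsto_div ha_ub hratio hε] with n hSm hSε
    rw [hrec n]
    refine ⟨fun hxn => step_le_of_le_mul (hm _ hxn) (ha_ub n).le hSm, fun hxn => ?_⟩
    have hSn : S n ≤ ε := hSε.trans (mul_le_of_le_one_right hε.le (by linarith [ha_lb n]))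
    linarith [step_le_add (S := S n) (hpos n).le (hf_range (x n)).1 (ha_ub n).le]
  refine tendsto_order.2 ⟨fun b hb => Eventually.of_forall fun n => hb.trans (hpos n),
    fun δ hδ => (hsmall (δ / 4) (by positivity)).mono fun n hn => by linarith⟩

theorem deterministic_stability
    (f : ℝ → ℝ) (hf_cont : Continuous f) (hf_range : ∀ u, f u ∈ Set.Icc (0 : ℝ) 1)
    (hf0 : f 0 = 0)
    (hf_inf : ∀ c : ℝ, 0 < c → 0 < sInf ((fun u => u * f u) '' Set.Ioi c))
    (a S x : ℕ → ℝ)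
    (ha_lb : ∀ n, -1 < a n) (ha_ub : ∀ n, a n < 0)
    (ha_sum : Tendsto (fun N => ∑ n ∈ Finset.range N, a n) atTop atBot)
    (hS : ∀ n, 0 ≤ S n)
    (hratio : Tendsto (fun n => S n / a n) atTop (nhds 0))
    (hx0 : 0 < x 0)
    (hrec : ∀ n, x (n + 1) = x n * (1 + f (x n) * a n) + S n) :
    Tendsto x atTop (nhds 0) :=
  deterministic_stability_general f hf_range hf_inf a S x ha_lb ha_ub ha_sum hS hratio hx0 hrec
end

section
/- Let (Ω, F, (F_n), P) be a filtered probability space and Z_n a nonnegative F_n-adapted integrable process satisfying Z_{n+1} ≤ Z_n + u_n − v_n + ν_{n+1}, where (ν_n) is an F_n-martingale difference and (u_n), (v_n) are nonnegative F_n-adapted integrable processes. Then, almost surely on the event {Σ_n u_n < ∞}, one has Σ_n v_n < ∞ and Z_n converges to a finite limit. -/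
/-! The compensated process `X n = Z n + ∑_{k<n} (v k - u k)` is a supermartingale bounded below
by `-∑_{k<n} u k`. Stopped at the first time the partial sums of `u` exceed `a`, it is a
supermartingale bounded below by `-a`, hence L¹-bounded and a.s. convergent; on the event that
the partial sums of `u` stay below `a` it is never stopped. Letting `a` run through `ℕ` covers
`{∑ u < ∞}`, where then `Z n + ∑_{k<n} v k` converges, forcing `∑ v < ∞` and convergence of `Z`. -/

open MeasureTheory Filter Finset Topology

namespace MeasureTheory

variable {Ω : Type*} {m0 : MeasurableSpace Ω} {μ : Measure Ω} {ℱ : Filtration ℕ m0}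

theorem Supermartingale.stoppedProcess [SigmaFiniteFiltration μ ℱ] {X : ℕ → Ω → ℝ}
    {τ : Ω → WithTop ℕ} (hX : Supermartingale X ℱ μ) (hτ : IsStoppingTime ℱ τ) :
    Supermartingale (stoppedProcess X τ) ℱ μ := by
  have h := (hX.neg.stoppedProcess hτ).neg
  rwa [MeasureTheory.stoppedProcess_neg, neg_neg] at h

theorem Supermartingale.exists_ae_tendsto_of_forall_le [IsFiniteMeasure μ] {X : ℕ → Ω → ℝ}
    {c : ℝ} (hX : Supermartingale X ℱ μ) (hc : ∀ n ω, c ≤ X n ω) :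
    ∀ᵐ ω ∂μ, ∃ l, Tendsto (fun n => X n ω) atTop (𝓝 l) := by
  set b := 2 * min c 0
  have habs_le : ∀ n ω, ‖X n ω‖ ≤ X n ω - b := fun n ω =>
    abs_le.2 ⟨by linarith [hc n ω, min_le_left c 0], by linarith [min_le_right c 0]⟩
  have hbdd : ∀ n, eLpNorm ((-X) n) 1 μ ≤ (∫ ω, X 0 ω ∂μ - μ.real Set.univ * b).toNNReal := by
    intro n
    have hint := hX.integrable n
    rw [Pi.neg_apply, eLpNorm_neg, eLpNorm_one_eq_lintegral_enorm,
      ← ofReal_integral_norm_eq_lintegral_enorm hint]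
    refine ENNReal.ofReal_le_ofReal ?_
    calc ∫ ω, ‖X n ω‖ ∂μ ≤ ∫ ω, (X n ω - b) ∂μ :=
          integral_mono hint.norm (hint.sub (integrable_const _)) (habs_le n)
      _ = ∫ ω, X n ω ∂μ - μ.real Set.univ * b := by
          rw [integral_sub hint (integrable_const _), integral_const, smul_eq_mul]
      _ ≤ ∫ ω, X 0 ω ∂μ - μ.real Set.univ * b := by
          simpa using hX.setIntegral_le (Nat.zero_le n) MeasurableSet.univ
  filter_upwards [hX.neg.exists_ae_tendsto_of_bdd hbdd] with ω ⟨l, hl⟩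
  exact ⟨-l, by simpa using hl.neg⟩

theorem supermartingale_of_sub_le_of_condExp_eq_zero [IsFiniteMeasure μ] {X ν : ℕ → Ω → ℝ}
    (hX : StronglyAdapted ℱ X) (hX_int : ∀ n, Integrable (X n) μ)
    (hν_int : ∀ n, Integrable (ν (n + 1)) μ) (hν : ∀ n, μ[ν (n + 1)|ℱ n] =ᵐ[μ] 0)
    (hle : ∀ n, X (n + 1) - X n ≤ᵐ[μ] ν (n + 1)) :
    Supermartingale X ℱ μ := by
  refine supermartingale_of_condExp_sub_nonneg_nat hX hX_int fun n => ?_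
  have hle' : -ν (n + 1) ≤ᵐ[μ] X n - X (n + 1) := by
    filter_upwards [hle n] with ω hω
    simp only [Pi.neg_apply, Pi.sub_apply] at hω ⊢
    linarith
  filter_upwards [hν n, condExp_neg (ν (n + 1)) (ℱ n),
    condExp_mono (hν_int n).neg ((hX_int n).sub (hX_int (n + 1))) hle'] with ω h₀ hneg hmono
  simp only [Pi.zero_apply, Pi.neg_apply] at h₀ hneg ⊢
  linarith

theorem supermartingale_add_sum_range_sub [IsFiniteMeasure μ] {Z u v ν : ℕ → Ω → ℝ}
    (hZ : StronglyAdapted ℱ Z) (hZ_int : ∀ n, Integrable (Z n) μ)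
    (hu : StronglyAdapted ℱ u) (hu_int : ∀ n, Integrable (u n) μ)
    (hv : StronglyAdapted ℱ v) (hv_int : ∀ n, Integrable (v n) μ)
    (hν_int : ∀ n, Integrable (ν (n + 1)) μ) (hν : ∀ n, μ[ν (n + 1)|ℱ n] =ᵐ[μ] 0)
    (hrec : ∀ n, ∀ᵐ ω ∂μ, Z (n + 1) ω ≤ Z n ω + u n ω - v n ω + ν (n + 1) ω) :
    Supermartingale (fun n ω => Z n ω + ∑ k ∈ range n, (v k ω - u k ω)) ℱ μ := by
  refine supermartingale_of_sub_le_of_condExp_eq_zero (fun n => ?_)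
    (fun n => (hZ_int n).add (integrable_finsetSum _ fun k _ => (hv_int k).sub (hu_int k)))
    hν_int hν fun n => ?_
  · refine (hZ n).add (stronglyMeasurable_fun_sum _ fun k hk => ?_)
    have hkn : k ≤ n := (mem_range.1 hk).le
    exact (hv.stronglyMeasurable_le hkn).sub (hu.stronglyMeasurable_le hkn)
  · filter_upwards [hrec n] with ω hω
    simp only [Pi.sub_apply, sum_range_succ]
    linarith

theorem stronglyAdapted_sum_range_succ {u : ℕ → Ω → ℝ} (hu : StronglyAdapted ℱ u) :
    StronglyAdapted ℱ fun n ω => ∑ k ∈ range (n + 1), u k ω := fun _ =>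
  stronglyMeasurable_fun_sum _ fun _ hk =>
    hu.stronglyMeasurable_le (Nat.lt_succ_iff.1 (mem_range.1 hk))

theorem Supermartingale.ae_exists_tendsto_of_sum_range_le [IsFiniteMeasure μ]
    {X u : ℕ → Ω → ℝ} (hX : Supermartingale X ℱ μ) (hu : StronglyAdapted ℱ u)
    (hXu : ∀ n ω, -∑ k ∈ range n, u k ω ≤ X n ω) {a : ℝ} (ha : 0 ≤ a) :
    ∀ᵐ ω ∂μ, (∀ n, ∑ k ∈ range (n + 1), u k ω ≤ a) →
      ∃ l, Tendsto (fun n => X n ω) atTop (𝓝 l) := by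
  set τ := hittingAfter (fun n ω => ∑ k ∈ range (n + 1), u k ω) (Set.Ioi a) 0
  have hτ : IsStoppingTime ℱ τ :=
    (stronglyAdapted_sum_range_succ hu).adapted.isStoppingTime_hittingAfter measurableSet_Ioi
  have hsum_le : ∀ ω (m : ℕ), (m : WithTop ℕ) ≤ τ ω → ∑ k ∈ range m, u k ω ≤ a := by
    rintro ω (_ | m) hm
    · simpa using ha
    · by_contra! hm_gt
      have : τ ω ≤ m := hittingAfter_le_of_mem (u := fun n ω => ∑ k ∈ range (n + 1), u k ω)
        (Nat.zero_le m) hm_gt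
      have hm_le : ((m + 1 : ℕ) : WithTop ℕ) ≤ m := hm.trans this
      norm_cast at hm_le
      omega
  have hbdd : ∀ n ω, -a ≤ MeasureTheory.stoppedProcess X τ n ω := by
    intro n ω
    rcases le_total (n : WithTop ℕ) (τ ω) with hn | hτn
    · rw [stoppedProcess_eq_of_le (i := n) hn]
      exact (neg_le_neg (hsum_le ω n hn)).trans (hXu n ω)
    · obtain ⟨m, hm⟩ := WithTop.ne_top_iff_exists.1 (ne_top_of_le_ne_top WithTop.coe_ne_top hτn)
      rw [stoppedProcess_eq_of_ge (i := n) hτn, ← hm]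
      exact (neg_le_neg (hsum_le ω m hm.le)).trans (hXu m ω)
  filter_upwards [(hX.stoppedProcess hτ).exists_ae_tendsto_of_forall_le hbdd] with ω ⟨l, hl⟩ hω
  have hτ_top : τ ω = ⊤ := hittingAfter_eq_top_iff.2 fun n _ => not_lt.2 (hω n)
  exact ⟨l, by simpa [stoppedProcess_eq_of_le, hτ_top] using hl⟩

end MeasureTheory

theorem summable_and_exists_tendsto_of_tendsto_add_sum_range {z v : ℕ → ℝ} {l : ℝ}
    (hz : ∀ n, 0 ≤ z n) (hv : ∀ n, 0 ≤ v n)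
    (h : Tendsto (fun n => z n + ∑ k ∈ range n, v k) atTop (𝓝 l)) :
    Summable v ∧ ∃ l', Tendsto z atTop (𝓝 l') := by
  obtain ⟨C, hC⟩ := h.bddAbove_range
  have hv_sum : Summable v := summable_of_sum_range_le hv fun n => by
    linarith [hz n, hC ⟨n, rfl⟩]
  refine ⟨hv_sum, l - ∑' n, v n, (h.sub hv_sum.hasSum.tendsto_sum_nat).congr fun n => ?_⟩
  ring

theorem robbins_siegmund_general
    {Ω : Type*} {m0 : MeasurableSpace Ω} (μ : Measure Ω) [IsProbabilityMeasure μ]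
    (ℱ : Filtration ℕ m0)
    (Z u v : ℕ → Ω → ℝ) (ν : ℕ → Ω → ℝ)
    (hZ_adapted : Adapted ℱ Z) (hZ_nonneg : ∀ n ω, 0 ≤ Z n ω)
    (hZ_int : ∀ n, Integrable (Z n) μ)
    (hu_adapted : Adapted ℱ u) (hu_nonneg : ∀ n ω, 0 ≤ u n ω)
    (hu_int : ∀ n, Integrable (u n) μ)
    (hv_adapted : Adapted ℱ v) (hv_nonneg : ∀ n ω, 0 ≤ v n ω)
    (hv_int : ∀ n, Integrable (v n) μ)
    (hν_int : ∀ n, Integrable (ν n) μ)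
    (hν_cond : ∀ n, μ[ν (n + 1)|ℱ n] =ᵐ[μ] 0)
    (hrec : ∀ n, ∀ᵐ ω ∂μ, Z (n + 1) ω ≤ Z n ω + u n ω - v n ω + ν (n + 1) ω) :
    ∀ᵐ ω ∂μ, (Summable fun n => u n ω) →
      (Summable fun n => v n ω) ∧ ∃ l : ℝ, Tendsto (fun n => Z n ω) atTop (nhds l) := by
  set X := fun n ω => Z n ω + ∑ k ∈ range n, (v k ω - u k ω)
  have hX : Supermartingale X ℱ μ :=
    supermartingale_add_sum_range_sub hZ_adapted.stronglyAdapted hZ_int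
      hu_adapted.stronglyAdapted hu_int hv_adapted.stronglyAdapted hv_int
      (fun n => hν_int (n + 1)) hν_cond hrec
  have hX_ge : ∀ n ω, -∑ k ∈ range n, u k ω ≤ X n ω := fun n ω => by
    have hv_sum_nonneg := sum_nonneg fun k (_ : k ∈ range n) => hv_nonneg k ω
    simp only [X, sum_sub_distrib]
    linarith [hZ_nonneg n ω]
  have hX_conv : ∀ᵐ ω ∂μ, ∀ a : ℕ, (∀ n, ∑ k ∈ range (n + 1), u k ω ≤ a) →
      ∃ l, Tendsto (fun n => X n ω) atTop (𝓝 l) :=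
    ae_all_iff.2 fun a =>
      hX.ae_exists_tendsto_of_sum_range_le hu_adapted.stronglyAdapted hX_ge a.cast_nonneg
  filter_upwards [hX_conv] with ω hω hu_sum
  obtain ⟨l, hl⟩ := hω ⌈∑' n, u n ω⌉₊ fun n =>
    (hu_sum.sum_le_tsum _ fun k _ => hu_nonneg k ω).trans (Nat.le_ceil _)
  refine summable_and_exists_tendsto_of_tendsto_add_sum_range (hZ_nonneg · ω) (hv_nonneg · ω)
    ((hl.add hu_sum.hasSum.tendsto_sum_nat).congr fun n => ?_)
  simp only [X, sum_sub_distrib]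
  ring

theorem robbins_siegmund
    {Ω : Type*} {m0 : MeasurableSpace Ω} (μ : Measure Ω) [IsProbabilityMeasure μ]
    (ℱ : Filtration ℕ m0)
    (Z u v : ℕ → Ω → ℝ) (ν : ℕ → Ω → ℝ)
    (hZ_adapted : Adapted ℱ Z) (hZ_nonneg : ∀ n ω, 0 ≤ Z n ω)
    (hZ_int : ∀ n, Integrable (Z n) μ)
    (hu_adapted : Adapted ℱ u) (hu_nonneg : ∀ n ω, 0 ≤ u n ω)
    (hu_int : ∀ n, Integrable (u n) μ)
    (hv_adapted : Adapted ℱ v) (hv_nonneg : ∀ n ω, 0 ≤ v n ω)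
    (hv_int : ∀ n, Integrable (v n) μ)
    (hν_meas : ∀ n, StronglyMeasurable[ℱ (n + 1)] (ν (n + 1)))
    (hν_int : ∀ n, Integrable (ν n) μ)
    (hν_cond : ∀ n, μ[ν (n + 1)|ℱ n] =ᵐ[μ] 0)
    (hrec : ∀ n, ∀ᵐ ω ∂μ, Z (n + 1) ω ≤ Z n ω + u n ω - v n ω + ν (n + 1) ω) :
    ∀ᵐ ω ∂μ, (Summable fun n => u n ω) →
      (Summable fun n => v n ω) ∧ ∃ l : ℝ, Tendsto (fun n => Z n ω) atTop (nhds l) :=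
  robbins_siegmund_general μ ℱ Z u v ν hZ_adapted hZ_nonneg hZ_int hu_adapted hu_nonneg hu_int
    hv_adapted hv_nonneg hv_int hν_int hν_cond hrec
end

section
/- Let ξ_n (n ≥ 1) be independent random variables with 1 + ξ_n > 0 a.s., let S_n > 0 be non-random, X_0 > 0, and X_{n+1} = X_n(1 + ξ_{n+1}) + S_n. Suppose there exists α ∈ (0, 1] such that Σ_n [E(1+ξ_{n+1})^α − 1]^+ < ∞ and Σ_n S_n^α < ∞. Then X_n converges a.s. to a finite limit. If moreover Σ_n [E(1+ξ_{n+1})^α − 1]^− = −∞, then X_n → 0 a.s. -/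
/-!
Put `Y n = X n ^ α` and `a n = E (1 + ξ (n + 1)) ^ α`. Since `t ↦ t ^ α` is subadditive for
`α ≤ 1`, `Y (n + 1) ≤ Y n (1 + ξ (n + 1)) ^ α + S n ^ α`, and independence of `ξ (n + 1)` from the
past turns this into `E[Y (n + 1) | ℱ n] ≤ a n Y n + S n ^ α`. Dividing `Y n` by the convergent
products `∏ k < n, max (a k) 1` leaves an almost supermartingale whose defect is at most
`S n ^ α`; adding the tail of the defect series gives a nonnegative supermartingale, so `Y n`, hence
`X n`, converges a.s. Taking expectations, `E Y (n + 1) ≤ a n E Y n + S n ^ α`, and `∑ [a n - 1]⁻ = -∞` forces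
`E Y n ≤ exp (∑ (a k - 1)) E Y m + (tail of ∑ S ^ α) → 0`; an a.s. limit of nonnegative variables
with vanishing means is `0`.
-/

open MeasureTheory ProbabilityTheory Filter
open scoped Topology

lemma rpow_mul_add_le {x y s α : ℝ} (hx : 0 ≤ x) (hy : 0 ≤ y) (hs : 0 ≤ s) (hα0 : 0 ≤ α)
    (hα1 : α ≤ 1) : (x * y + s) ^ α ≤ x ^ α * y ^ α + s ^ α := by
  rw [← Real.mul_rpow hx hy]
  exact Real.rpow_add_le_add_rpow (mul_nonneg hx hy) hs hα0 hα1

lemma tendsto_of_tendsto_rpow {x : ℕ → ℝ} {α L : ℝ} (hx : ∀ n, 0 ≤ x n) (hα : 0 < α)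
    (h : Tendsto (fun n => x n ^ α) atTop (𝓝 L)) : Tendsto x atTop (𝓝 (L ^ α⁻¹)) :=
  ((Real.continuousAt_rpow_const L α⁻¹ (Or.inr (inv_pos.2 hα).le)).tendsto.comp h).congr
    fun n => Real.rpow_rpow_inv (hx n) hα.ne'

lemma nonneg_of_rec {x r S : ℕ → ℝ} (hx0 : 0 ≤ x 0) (hr : ∀ n, 0 ≤ r n) (hS : ∀ n, 0 ≤ S n)
    (hrec : ∀ n, x (n + 1) = x n * r (n + 1) + S n) (n : ℕ) : 0 ≤ x n := by
  induction n with
  | zero => exact hx0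
  | succ n ih => rw [hrec]; exact add_nonneg (mul_nonneg ih (hr _)) (hS n)

section Recursion

variable {u a s : ℕ → ℝ}

lemma le_exp_mul_add_of_le_mul_add (ha : ∀ n, 0 ≤ a n) (hs : ∀ n, 0 ≤ s n)
    (hrec : ∀ n, u (n + 1) ≤ a n * u n + s n) {m n : ℕ} (hum : 0 ≤ u m) (hmn : m ≤ n) :
    u n ≤ Real.exp (∑ k ∈ Finset.Ico m n, (a k - 1)) * u m
      + Real.exp (∑ k ∈ Finset.Ico m n, max (a k - 1) 0) * ∑ k ∈ Finset.Ico m n, s k := by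
  induction n, hmn using Nat.le_induction with
  | base => simp
  | succ n hmn ih =>
    set E := Real.exp (∑ k ∈ Finset.Ico m n, (a k - 1))
    set F := Real.exp (∑ k ∈ Finset.Ico m n, max (a k - 1) 0)
    set R := ∑ k ∈ Finset.Ico m n, s k
    have ha_exp : a n ≤ Real.exp (a n - 1) := by linarith [Real.add_one_le_exp (a n - 1)]
    have hE : a n * E ≤ E * Real.exp (a n - 1) := by rw [mul_comm]; gcongr
    have hF : a n * F ≤ F * Real.exp (max (a n - 1) 0) := by
      rw [mul_comm]; gcongr; exact ha_exp.trans (Real.exp_le_exp.2 (le_max_left _ _))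
    have hF1 : 1 ≤ F * Real.exp (max (a n - 1) 0) :=
      one_le_mul_of_one_le_of_one_le
        (Real.one_le_exp (Finset.sum_nonneg fun _ _ => le_max_right _ _))
        (Real.one_le_exp (le_max_right _ _))
    have hR : 0 ≤ R := Finset.sum_nonneg fun k _ => hs k
    rw [Finset.sum_Ico_succ_top hmn, Finset.sum_Ico_succ_top hmn, Finset.sum_Ico_succ_top hmn,
      Real.exp_add, Real.exp_add]
    calc u (n + 1) ≤ a n * (E * u m + F * R) + s n := (hrec n).trans (by gcongr; exact ha n)
      _ = (a n * E) * u m + (a n * F) * R + s n := by ring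
      _ ≤ E * Real.exp (a n - 1) * u m + F * Real.exp (max (a n - 1) 0) * (R + s n) := by
        nlinarith [mul_le_mul_of_nonneg_right hE hum, mul_le_mul_of_nonneg_right hF hR,
          mul_le_mul_of_nonneg_right hF1 (hs n)]

lemma tendsto_sum_Ico_sub_one_atBot (ha_pos : Summable fun n => max (a n - 1) 0)
    (ha_neg : Tendsto (fun N => ∑ n ∈ Finset.range N, min (a n - 1) 0) atTop atBot) (m : ℕ) :
    Tendsto (fun n => ∑ k ∈ Finset.Ico m n, (a k - 1)) atTop atBot := by
  refine tendsto_atBot_mono' atTop ?_ (tendsto_atBot_add_const_right _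
    ((∑' k, max (a k - 1) 0) - ∑ k ∈ Finset.range m, min (a k - 1) 0) ha_neg)
  filter_upwards [eventually_ge_atTop m] with n hmn
  have hsplit : ∑ k ∈ Finset.Ico m n, (a k - 1)
      = ∑ k ∈ Finset.Ico m n, max (a k - 1) 0 + ∑ k ∈ Finset.Ico m n, min (a k - 1) 0 := by
    rw [← Finset.sum_add_distrib]
    exact Finset.sum_congr rfl fun k _ => by rw [max_add_min, add_zero]
  rw [hsplit, Finset.sum_Ico_eq_sub (fun k => min (a k - 1) 0) hmn]
  linarith [ha_pos.sum_le_tsum (Finset.Ico m n) fun k _ => le_max_right (a k - 1) 0]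

lemma tendsto_zero_of_le_mul_add (hu : ∀ n, 0 ≤ u n) (ha : ∀ n, 0 ≤ a n) (hs : ∀ n, 0 ≤ s n)
    (hs_sum : Summable s) (hrec : ∀ n, u (n + 1) ≤ a n * u n + s n)
    (ha_pos : Summable fun n => max (a n - 1) 0)
    (ha_neg : Tendsto (fun N => ∑ n ∈ Finset.range N, min (a n - 1) 0) atTop atBot) :
    Tendsto u atTop (𝓝 0) := by
  set T := ∑' k, max (a k - 1) 0
  have htail : Tendsto (fun m => Real.exp T * (∑' k, s k - ∑ k ∈ Finset.range m, s k))
      atTop (𝓝 0) := by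
    simpa using (hs_sum.hasSum.tendsto_sum_nat.const_sub (∑' k, s k)).const_mul (Real.exp T)
  refine tendsto_order.2 ⟨fun ε hε => Eventually.of_forall fun n => hε.trans_le (hu n),
    fun ε hε => ?_⟩
  obtain ⟨m, hm⟩ := (htail.eventually (gt_mem_nhds (half_pos hε))).exists
  have hdecay :
      Tendsto (fun n => Real.exp (∑ k ∈ Finset.Ico m n, (a k - 1)) * u m) atTop (𝓝 0) := by
    simpa using (Real.tendsto_exp_atBot.comp
      (tendsto_sum_Ico_sub_one_atBot ha_pos ha_neg m)).mul_const (u m)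
  filter_upwards [hdecay.eventually (gt_mem_nhds (half_pos hε)), eventually_ge_atTop m]
    with n hn hmn
  have hF : Real.exp (∑ k ∈ Finset.Ico m n, max (a k - 1) 0) ≤ Real.exp T :=
    Real.exp_le_exp.2 (ha_pos.sum_le_tsum _ fun k _ => le_max_right _ _)
  have hR : ∑ k ∈ Finset.Ico m n, s k ≤ ∑' k, s k - ∑ k ∈ Finset.range m, s k := by
    rw [Finset.sum_Ico_eq_sub _ hmn]
    linarith [hs_sum.sum_le_tsum (Finset.range n) fun k _ => hs k]
  calc u n ≤ Real.exp (∑ k ∈ Finset.Ico m n, (a k - 1)) * u m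
        + Real.exp (∑ k ∈ Finset.Ico m n, max (a k - 1) 0) * ∑ k ∈ Finset.Ico m n, s k :=
        le_exp_mul_add_of_le_mul_add ha hs hrec (hu m) hmn
    _ ≤ Real.exp (∑ k ∈ Finset.Ico m n, (a k - 1)) * u m
        + Real.exp T * (∑' k, s k - ∑ k ∈ Finset.range m, s k) := by
        gcongr
        exact Finset.sum_nonneg fun k _ => hs k
    _ < ε := by linarith

end Recursion

section Probability

variable {Ω : Type*} {m0 : MeasurableSpace Ω} {μ : Measure Ω}

lemma eLpNorm_one_eq_ofReal_integral {f : Ω → ℝ} (hf : Integrable f μ) (h0 : 0 ≤ᵐ[μ] f) :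
    eLpNorm f 1 μ = ENNReal.ofReal (∫ ω, f ω ∂μ) := by
  rw [eLpNorm_one_eq_lintegral_enorm, ofReal_integral_eq_lintegral_ofReal hf h0]
  exact lintegral_congr_ae (h0.mono fun ω hω => Real.enorm_eq_ofReal hω)

theorem MeasureTheory.Supermartingale.exists_ae_tendsto_of_nonneg [IsFiniteMeasure μ]
    {ℱ : Filtration ℕ m0} {M : ℕ → Ω → ℝ} (hM : Supermartingale M ℱ μ) (hM0 : ∀ n, 0 ≤ᵐ[μ] M n) :
    ∀ᵐ ω ∂μ, ∃ L, Tendsto (fun n => M n ω) atTop (𝓝 L) := by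
  have hbdd : ∀ n, eLpNorm ((-M) n) 1 μ ≤ ENNReal.ofReal (∫ ω, M 0 ω ∂μ) := by
    intro n
    rw [Pi.neg_apply, eLpNorm_neg, eLpNorm_one_eq_ofReal_integral (hM.integrable n) (hM0 n)]
    exact ENNReal.ofReal_le_ofReal <| by
      simpa using hM.setIntegral_le (Nat.zero_le n) MeasurableSet.univ
  filter_upwards [hM.neg.exists_ae_tendsto_of_bdd hbdd] with ω ⟨L, hL⟩
  exact ⟨-L, by simpa using hL.neg⟩

theorem ae_tendsto_of_condExp_le_add [IsFiniteMeasure μ] {ℱ : Filtration ℕ m0}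
    {Z : ℕ → Ω → ℝ} {s : ℕ → ℝ} (hZ : StronglyAdapted ℱ Z) (hint : ∀ n, Integrable (Z n) μ)
    (hZ0 : ∀ n, 0 ≤ᵐ[μ] Z n) (hs0 : ∀ n, 0 ≤ s n) (hs : Summable s)
    (hcond : ∀ n, μ[Z (n + 1)|ℱ n] ≤ᵐ[μ] fun ω => Z n ω + s n) :
    ∀ᵐ ω ∂μ, ∃ L, Tendsto (fun n => Z n ω) atTop (𝓝 L) := by
  set t : ℕ → ℝ := fun n => ∑' k, s k - ∑ k ∈ Finset.range n, s k
  have ht0 : ∀ n, 0 ≤ t n := fun n => sub_nonneg.2 (hs.sum_le_tsum _ fun k _ => hs0 k)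
  have ht : Tendsto t atTop (𝓝 0) := by
    simpa using hs.hasSum.tendsto_sum_nat.const_sub (∑' k, s k)
  have hM : Supermartingale (fun n ω => Z n ω + t n) ℱ μ := by
    refine supermartingale_nat (fun n => (hZ n).add stronglyMeasurable_const)
      (fun n => (hint n).add (integrable_const _)) fun n => ?_
    filter_upwards [condExp_add (hint (n + 1)) (integrable_const (t (n + 1))) (ℱ n), hcond n]
      with ω hadd hω
    change μ[Z (n + 1) + fun _ => t (n + 1)|ℱ n] ω ≤ _
    rw [hadd, Pi.add_apply, condExp_const (ℱ.le n)]
    have : t n = s n + t (n + 1) := by simp only [t, Finset.sum_range_succ]; ring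
    linarith
  have hM0 : ∀ n, 0 ≤ᵐ[μ] fun ω => Z n ω + t n :=
    fun n => (hZ0 n).mono fun ω h => add_nonneg h (ht0 n)
  filter_upwards [hM.exists_ae_tendsto_of_nonneg hM0] with ω ⟨L, hL⟩
  exact ⟨L, by simpa using hL.sub ht⟩

theorem ae_tendsto_of_condExp_le_mul_add [IsFiniteMeasure μ] {ℱ : Filtration ℕ m0}
    {Y : ℕ → Ω → ℝ} {c s : ℕ → ℝ} (hY : StronglyAdapted ℱ Y) (hint : ∀ n, Integrable (Y n) μ)
    (hY0 : ∀ n, 0 ≤ᵐ[μ] Y n) (hc : Summable fun n => max (c n - 1) 0) (hs0 : ∀ n, 0 ≤ s n)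
    (hs : Summable s) (hcond : ∀ n, μ[Y (n + 1)|ℱ n] ≤ᵐ[μ] fun ω => c n * Y n ω + s n) :
    ∀ᵐ ω ∂μ, ∃ L, Tendsto (fun n => Y n ω) atTop (𝓝 L) := by
  set b : ℕ → ℝ := fun n => ∏ k ∈ Finset.range n, (1 + max (c k - 1) 0)
  have hb1 : ∀ n, 1 ≤ b n := fun n =>
    Finset.one_le_prod fun k _ => le_add_of_nonneg_right (le_max_right _ _)
  have hb0 : ∀ n, 0 < b n := fun n => one_pos.trans_le (hb1 n)
  obtain ⟨B, hB⟩ : ∃ B, Tendsto b atTop (𝓝 B) :=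
    ⟨_, (Real.multipliable_one_add_of_summable hc).hasProd.tendsto_prod_nat⟩
  have hZcond : ∀ n, μ[fun ω => Y (n + 1) ω / b (n + 1)|ℱ n]
      ≤ᵐ[μ] fun ω => Y n ω / b n + s n / b (n + 1) := by
    intro n
    have hsmul : (fun ω => Y (n + 1) ω / b (n + 1)) = (b (n + 1))⁻¹ • Y (n + 1) := by
      ext ω; simp [div_eq_inv_mul]
    filter_upwards [hcond n, hY0 n, condExp_smul (μ := μ) (b (n + 1))⁻¹ (Y (n + 1)) (ℱ n)]
      with ω hω hYω hsmulω
    rw [hsmul, hsmulω, Pi.smul_apply, smul_eq_mul]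
    have hc_le : c n * Y n ω ≤ b (n + 1) / b n * Y n ω := by
      gcongr
      rw [show b (n + 1) = b n * (1 + max (c n - 1) 0) from Finset.prod_range_succ _ _,
        mul_div_cancel_left₀ _ (hb0 n).ne']
      linarith [le_max_left (c n - 1) 0]
    calc (b (n + 1))⁻¹ * μ[Y (n + 1)|ℱ n] ω ≤ (b (n + 1))⁻¹ * (b (n + 1) / b n * Y n ω + s n) := by
          gcongr
          linarith
      _ = Y n ω / b n + s n / b (n + 1) := by field_simp [(hb0 n).ne', (hb0 (n + 1)).ne']
  have hZ := ae_tendsto_of_condExp_le_add (Z := fun n ω => Y n ω / b n)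
    (fun n => ((hY n).measurable.div_const _).stronglyMeasurable) (fun n => (hint n).div_const _)
    (fun n => (hY0 n).mono fun ω h => div_nonneg h (hb0 n).le)
    (fun n => div_nonneg (hs0 n) (hb0 _).le)
    (hs.of_nonneg_of_le (fun n => div_nonneg (hs0 n) (hb0 _).le)
      fun n => div_le_self (hs0 n) (hb1 _)) hZcond
  filter_upwards [hZ] with ω ⟨L, hL⟩
  exact ⟨B * L, (hB.mul hL).congr fun n => mul_div_cancel₀ _ (hb0 n).ne'⟩

theorem condExp_mul_of_indep [IsFiniteMeasure μ] {m mW : MeasurableSpace Ω} {Y W : Ω → ℝ}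
    (hm : m ≤ m0) (hmW : mW ≤ m0) (hY : StronglyMeasurable[m] Y) (hW : StronglyMeasurable[mW] W)
    (hind : Indep mW m μ) (hYW : Integrable (Y * W) μ) (hWint : Integrable W μ) :
    μ[Y * W|m] =ᵐ[μ] fun ω => μ[W] * Y ω := by
  filter_upwards [condExp_mul_of_stronglyMeasurable_left hY hYW hWint,
    condExp_indep_eq hmW hm hW hind] with ω hmul hindep
  rw [hmul, Pi.mul_apply, hindep, mul_comm]

theorem integrable_of_le_mul_add [IsFiniteMeasure μ] {ℱ : Filtration ℕ m0} {Y W : ℕ → Ω → ℝ}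
    {s : ℕ → ℝ} (hY : StronglyAdapted ℱ Y)
    (hind : ∀ n, Indep (MeasurableSpace.comap (W (n + 1)) inferInstance) (ℱ n) μ)
    (hWint : ∀ n, Integrable (W n) μ) (hY0 : ∀ n, 0 ≤ᵐ[μ] Y n) (hYint0 : Integrable (Y 0) μ)
    (hle : ∀ n, Y (n + 1) ≤ᵐ[μ] fun ω => Y n ω * W (n + 1) ω + s n) (n : ℕ) :
    Integrable (Y n) μ := by
  induction n with
  | zero => exact hYint0
  | succ n ih =>
    have hindep : IndepFun (Y n) (W (n + 1)) μ :=
      (IndepFun_iff_Indep _ _ _).2 <|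
        indep_of_indep_of_le_left (hind n).symm (hY n).measurable.comap_le
    refine ((hindep.integrable_mul ih (hWint _)).add (integrable_const (s n))).mono'
      ((hY (n + 1)).mono (ℱ.le _)).aestronglyMeasurable ?_
    filter_upwards [hle n, hY0 (n + 1)] with ω hω h0
    rw [Real.norm_of_nonneg h0]
    exact hω

theorem condExp_succ_le_of_le_mul_add [IsFiniteMeasure μ] {ℱ : Filtration ℕ m0}
    {Y W : ℕ → Ω → ℝ} {s : ℕ → ℝ} (hY : StronglyAdapted ℱ Y) (hW : ∀ n, Measurable (W n))
    (hind : ∀ n, Indep (MeasurableSpace.comap (W (n + 1)) inferInstance) (ℱ n) μ)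
    (hint : ∀ n, Integrable (Y n) μ) (hWint : ∀ n, Integrable (W n) μ)
    (hle : ∀ n, Y (n + 1) ≤ᵐ[μ] fun ω => Y n ω * W (n + 1) ω + s n) (n : ℕ) :
    μ[Y (n + 1)|ℱ n] ≤ᵐ[μ] fun ω => μ[W (n + 1)] * Y n ω + s n := by
  have hYW : Integrable (Y n * W (n + 1)) μ :=
    ((IndepFun_iff_Indep _ _ _).2 <| indep_of_indep_of_le_left (hind n).symm
      (hY n).measurable.comap_le).integrable_mul (hint n) (hWint _)
  have hmono : μ[Y (n + 1)|ℱ n] ≤ᵐ[μ] μ[Y n * W (n + 1) + fun _ => s n|ℱ n] :=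
    condExp_mono (hint _) (hYW.add (integrable_const _)) (hle n)
  filter_upwards [hmono, condExp_add hYW (integrable_const (s n)) (ℱ n),
    condExp_mul_of_indep (ℱ.le n) (hW _).comap_le (hY n)
      (comap_measurable (W (n + 1))).stronglyMeasurable (hind n) hYW (hWint _)]
    with ω hω hadd hmul
  rw [hadd, Pi.add_apply, hmul, condExp_const (ℱ.le n)] at hω
  exact hω

theorem integral_succ_le_of_condExp_le [IsProbabilityMeasure μ] {ℱ : Filtration ℕ m0}
    {Y : ℕ → Ω → ℝ} {a s : ℕ → ℝ} (hint : ∀ n, Integrable (Y n) μ)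
    (hcond : ∀ n, μ[Y (n + 1)|ℱ n] ≤ᵐ[μ] fun ω => a n * Y n ω + s n) (n : ℕ) :
    ∫ ω, Y (n + 1) ω ∂μ ≤ a n * ∫ ω, Y n ω ∂μ + s n :=
  calc ∫ ω, Y (n + 1) ω ∂μ = ∫ ω, μ[Y (n + 1)|ℱ n] ω ∂μ := (integral_condExp (ℱ.le n)).symm
    _ ≤ ∫ ω, a n * Y n ω + s n ∂μ :=
      integral_mono_ae integrable_condExp (((hint n).const_mul _).add (integrable_const _))
        (hcond n)
    _ = a n * ∫ ω, Y n ω ∂μ + s n := by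
      rw [integral_add ((hint n).const_mul _) (integrable_const _), integral_const_mul]
      simp

theorem ae_tendsto_zero_of_tendsto_integral {Y : ℕ → Ω → ℝ} (hint : ∀ n, Integrable (Y n) μ)
    (hY0 : ∀ n, 0 ≤ᵐ[μ] Y n) (hI : Tendsto (fun n => ∫ ω, Y n ω ∂μ) atTop (𝓝 0))
    (hconv : ∀ᵐ ω ∂μ, ∃ L, Tendsto (fun n => Y n ω) atTop (𝓝 L)) :
    ∀ᵐ ω ∂μ, Tendsto (fun n => Y n ω) atTop (𝓝 0) := by
  have hmeas : TendstoInMeasure μ Y atTop 0 := by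
    refine tendstoInMeasure_of_tendsto_eLpNorm one_ne_zero (fun n => (hint n).1)
      aestronglyMeasurable_const ?_
    simp_rw [sub_zero, eLpNorm_one_eq_ofReal_integral (hint _) (hY0 _)]
    simpa using ENNReal.tendsto_ofReal hI
  obtain ⟨ns, hns, hsub⟩ := hmeas.exists_seq_tendsto_ae
  filter_upwards [hconv, hsub] with ω ⟨L, hL⟩ hω
  rwa [tendsto_nhds_unique (hL.comp hns.tendsto_atTop) hω] at hL

lemma stronglyAdapted_natural_of_rec {ξ X : ℕ → Ω → ℝ} {S : ℕ → ℝ} {X₀ : ℝ}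
    (hξ : ∀ n, StronglyMeasurable (ξ n)) (hX0 : ∀ ω, X 0 ω = X₀)
    (hrec : ∀ n ω, X (n + 1) ω = X n ω * (1 + ξ (n + 1) ω) + S n) :
    StronglyAdapted (Filtration.natural ξ hξ) X := by
  intro n
  induction n with
  | zero => rw [funext hX0]; exact stronglyMeasurable_const
  | succ n ih =>
    rw [funext (hrec n)]
    exact ((ih.mono (Filtration.mono _ n.le_succ)).mul (stronglyMeasurable_const.add
      (Filtration.stronglyAdapted_natural hξ (n + 1)))).add stronglyMeasurable_const

end Probability

theorem linear_nonhomogeneous_alpha_le_one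
    {Ω : Type*} [MeasurableSpace Ω] (μ : Measure Ω) [IsProbabilityMeasure μ]
    (ξ : ℕ → Ω → ℝ) (hξ_meas : ∀ n, Measurable (ξ n))
    (hξ_indep : iIndepFun ξ μ)
    (hξ_pos : ∀ n, ∀ᵐ ω ∂μ, 0 < 1 + ξ n ω)
    (S : ℕ → ℝ) (hS : ∀ n, 0 < S n)
    (X : ℕ → Ω → ℝ) (X₀ : ℝ) (hX₀ : 0 < X₀) (hX0 : ∀ ω, X 0 ω = X₀)
    (hrec : ∀ n ω, X (n + 1) ω = X n ω * (1 + ξ (n + 1) ω) + S n)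
    (α : ℝ) (hα0 : 0 < α) (hα1 : α ≤ 1)
    (hint : ∀ n, Integrable (fun ω => (1 + ξ n ω) ^ α) μ)
    (hpos_sum : Summable fun n => max ((∫ ω, (1 + ξ (n + 1) ω) ^ α ∂μ) - 1) 0)
    (hS_sum : Summable fun n => S n ^ α) :
    (∀ᵐ ω ∂μ, ∃ l : ℝ, Tendsto (fun n => X n ω) atTop (nhds l)) ∧
      ((Tendsto (fun N => ∑ n ∈ Finset.range N,
          min ((∫ ω, (1 + ξ (n + 1) ω) ^ α ∂μ) - 1) 0) atTop atBot) →
        ∀ᵐ ω ∂μ, Tendsto (fun n => X n ω) atTop (nhds 0)) := by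
  have hξ_sm : ∀ n, StronglyMeasurable (ξ n) := fun n => (hξ_meas n).stronglyMeasurable
  set ℱ := Filtration.natural ξ hξ_sm
  set W : ℕ → Ω → ℝ := fun n ω => (1 + ξ n ω) ^ α
  set Y : ℕ → Ω → ℝ := fun n ω => X n ω ^ α
  have hg : Measurable fun x : ℝ => (1 + x) ^ α := by fun_prop
  have hSα : ∀ n, 0 ≤ S n ^ α := fun n => Real.rpow_nonneg (hS n).le α
  have hξ_nn : ∀ᵐ ω ∂μ, ∀ n, 0 ≤ 1 + ξ n ω := ae_all_iff.2 fun n => (hξ_pos n).mono fun _ h => h.le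
  have hX : ∀ᵐ ω ∂μ, ∀ n, 0 ≤ X n ω := hξ_nn.mono fun ω hω =>
    nonneg_of_rec (x := (X · ω)) (by rw [hX0]; exact hX₀.le) hω (fun n => (hS n).le) (hrec · ω)
  have hY0 : ∀ n, 0 ≤ᵐ[μ] Y n := fun n => hX.mono fun ω h => Real.rpow_nonneg (h n) α
  have hY : StronglyAdapted ℱ Y := fun n =>
    ((stronglyAdapted_natural_of_rec hξ_sm hX0 hrec n).measurable.pow_const α).stronglyMeasurable
  have hind : ∀ n, Indep (MeasurableSpace.comap (W (n + 1)) inferInstance) (ℱ n) μ := fun n =>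
    indep_of_indep_of_le_left (hξ_indep.indep_comap_natural_of_lt hξ_sm n.lt_succ_self)
      (hg.comp (comap_measurable _)).comap_le
  have hle : ∀ n, Y (n + 1) ≤ᵐ[μ] fun ω => Y n ω * W (n + 1) ω + S n ^ α := fun n => by
    filter_upwards [hX, hξ_nn] with ω hXω hξω
    simpa only [Y, W, hrec n ω] using
      rpow_mul_add_le (hXω n) (hξω _) (hS n).le hα0.le hα1
  have hYint := integrable_of_le_mul_add hY hind hint hY0 (by simp [Y, hX0]) hle
  have hcond := condExp_succ_le_of_le_mul_add hY (fun n => hg.comp (hξ_meas n)) hind hYint hint hle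
  have hconv := ae_tendsto_of_condExp_le_mul_add hY hYint hY0 hpos_sum hSα hS_sum hcond
  refine ⟨?_, fun hneg => ?_⟩
  · filter_upwards [hconv, hX] with ω ⟨L, hL⟩ hXω
    exact ⟨_, tendsto_of_tendsto_rpow hXω hα0 hL⟩
  · have hI := tendsto_zero_of_le_mul_add (fun n => integral_nonneg_of_ae (hY0 n))
      (fun n => integral_nonneg_of_ae ((hξ_nn.mono fun ω h => Real.rpow_nonneg (h (n + 1)) α)))
      hSα hS_sum (integral_succ_le_of_condExp_le hYint hcond) hpos_sum hneg
    filter_upwards [ae_tendsto_zero_of_tendsto_integral hYint hY0 hI hconv, hX] with ω hω hXω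
    simpa [Real.zero_rpow (inv_ne_zero hα0.ne')] using tendsto_of_tendsto_rpow hXω hα0 hω
end

section
/- Let ξ_n be i.i.d. random variables with 1 + ξ_n > 0 a.s. and E[ln(1+ξ_n)] < 0, and let S_n > 0 be non-random with Σ_n S_n^α < ∞ for some α > 0. Then the solution of X_{n+1} = X_n(1 + ξ_{n+1}) + S_n with X_0 > 0 satisfies liminf_n X_n = 0 almost surely. -/
open MeasureTheory ProbabilityTheory Filter Finset
open scoped Topology

/-!
Suppose `X_n ≥ c > 0` for all large `n`. Then `X_n (1 + ξ_{n+1}) = X_{n+1} - S_n ≥ c/2 ≥ S_n`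
eventually, and `log (1 + t) ≤ ε + (t / ε) ^ α` on `[0, 1]` gives
`log X_{n+1} ≤ log X_n + log (1 + ξ_{n+1}) + ε + C S_n ^ α`. The power `α` is what makes the error
terms summable (only `∑ S_n ^ α` is assumed finite), at the price of the constant loss `ε`. Summing,
and taking `ε = -E log (1 + ξ) / 2`, the strong law of large numbers forces `log X_n → -∞`,
contradicting `X_n ≥ c`.
-/

lemma Real.log_one_add_le_add_div_rpow {t ε α : ℝ} (ht : 0 ≤ t) (ht1 : t ≤ 1) (hε : 0 < ε)
    (hα : 0 ≤ α) : Real.log (1 + t) ≤ ε + (t / ε) ^ α := by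
  have hlog : Real.log (1 + t) ≤ t := by
    linarith [Real.log_le_sub_one_of_pos (show 0 < 1 + t by linarith)]
  rcases le_or_gt t ε with htε | htε
  · linarith [Real.rpow_nonneg (div_nonneg ht hε.le) α]
  · have : 1 ≤ (t / ε) ^ α := Real.one_le_rpow ((one_le_div hε).2 htε.le) hα
    linarith

lemma Real.log_add_le_add_rpow {a c s ε α : ℝ} (hc : 0 < c) (hca : c ≤ a) (hs : 0 ≤ s)
    (hsc : s ≤ c) (hε : 0 < ε) (hα : 0 ≤ α) :
    Real.log (a + s) ≤ Real.log a + ε + s ^ α / (c * ε) ^ α := by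
  have ha : 0 < a := hc.trans_le hca
  have hsplit : Real.log (a + s) = Real.log a + Real.log (1 + s / a) := by
    rw [← Real.log_mul ha.ne' (by positivity), mul_add, mul_div_cancel₀ _ ha.ne', mul_one]
  have hsa : s / a ≤ 1 := (div_le_one ha).2 (hsc.trans hca)
  have hmono : (s / a / ε) ^ α ≤ (s / (c * ε)) ^ α := by
    rw [div_div]
    gcongr
  rw [Real.div_rpow hs (by positivity)] at hmono
  rw [hsplit]
  linarith [Real.log_one_add_le_add_div_rpow (by positivity) hsa hε hα]

theorem tendsto_sum_range_atBot_of_cesaro {z : ℕ → ℝ} {m : ℝ}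
    (hz : Tendsto (fun n : ℕ => (∑ i ∈ range n, z i) / n) atTop (𝓝 m)) (hm : m < 0) :
    Tendsto (fun n => ∑ i ∈ range n, z i) atTop atBot := by
  refine (tendsto_natCast_atTop_atTop.atTop_mul_neg hm hz).congr' ?_
  filter_upwards [eventually_ne_atTop 0] with n hn
  field_simp

theorem tendsto_cesaro_add_const {z : ℕ → ℝ} {m : ℝ}
    (hz : Tendsto (fun n : ℕ => (∑ i ∈ range n, z i) / n) atTop (𝓝 m)) (ε : ℝ) :
    Tendsto (fun n : ℕ => (∑ i ∈ range n, (z i + ε)) / n) atTop (𝓝 (m + ε)) := by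
  refine (hz.add_const ε).congr' ?_
  filter_upwards [eventually_ne_atTop 0] with n hn
  rw [sum_add_distrib, sum_const, card_range, nsmul_eq_mul]
  field_simp

theorem tendsto_atBot_of_succ_le_add_summable {y z w : ℕ → ℝ} {N : ℕ}
    (hstep : ∀ n ≥ N, y (n + 1) ≤ y n + z n + w n) (hw0 : ∀ n, 0 ≤ w n) (hw : Summable w)
    (hz : Tendsto (fun n => ∑ i ∈ range n, z i) atTop atBot) : Tendsto y atTop atBot := by
  have htel : ∀ n ≥ N, y n ≤ y N + ∑ i ∈ Ico N n, (z i + w i) := by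
    refine Nat.le_induction (by simp) fun n hn ih => ?_
    rw [sum_Ico_succ_top hn]
    linarith [hstep n hn]
  have hbound : ∀ n ≥ N, y n ≤ (y N - ∑ i ∈ range N, z i + ∑' i, w i) + ∑ i ∈ range n, z i := by
    intro n hn
    have hw_le : ∑ i ∈ Ico N n, w i ≤ ∑' i, w i := hw.sum_le_tsum _ fun i _ => hw0 i
    have := htel n hn
    rw [sum_add_distrib, sum_Ico_eq_sub _ hn] at this
    linarith
  exact tendsto_atBot_mono' atTop (eventually_atTop.2 ⟨N, hbound⟩)
    (tendsto_atBot_add_const_left _ _ hz)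

theorem liminf_eq_zero_of_frequently_lt {ι : Type*} {f : Filter ι} {u : ι → ℝ}
    (h0 : ∀ i, 0 ≤ u i) (h : ∀ c > 0, ∃ᶠ i in f, u i < c) : liminf u f = 0 := by
  have hset : {a : ℝ | ∀ᶠ i in f, a ≤ u i} = Set.Iic 0 := by
    ext a
    refine ⟨fun ha => Set.mem_Iic.2 <| not_lt.1 fun hpos => ?_, fun ha => Eventually.of_forall fun i => ?_⟩
    · simpa using (h a hpos).and_eventually ha |>.mono fun i hi => not_le.2 hi.1 hi.2
    · exact (Set.mem_Iic.1 ha).trans (h0 i)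
  rw [liminf_eq, hset, csSup_Iic]

theorem liminf_eq_zero_of_cesaro_log_neg {x r s : ℕ → ℝ} {α m : ℝ} (hα : 0 < α)
    (hx0 : 0 < x 0) (hr : ∀ n, 0 < r n) (hs : ∀ n, 0 ≤ s n) (hs_sum : Summable fun n => s n ^ α)
    (hrec : ∀ n, x (n + 1) = x n * r (n + 1) + s n)
    (hlog : Tendsto (fun n : ℕ => (∑ i ∈ range n, Real.log (r (i + 1))) / n) atTop (𝓝 m))
    (hm : m < 0) : liminf x atTop = 0 := by
  have hxpos : ∀ n, 0 < x n := by
    intro n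
    induction n with
    | zero => exact hx0
    | succ n ih => rw [hrec]; exact add_pos_of_pos_of_nonneg (mul_pos ih (hr _)) (hs n)
  refine liminf_eq_zero_of_frequently_lt (fun n => (hxpos n).le) fun c hc => ?_
  by_contra hfreq
  have hev : ∀ᶠ n in atTop, c ≤ x n := by simpa only [not_frequently, not_lt] using hfreq
  have hs_small : ∀ᶠ n in atTop, s n ≤ c / 2 := by
    filter_upwards [hs_sum.tendsto_atTop_zero.eventually
      (ge_mem_nhds (Real.rpow_pos_of_pos (half_pos hc) α))] with n hn
    exact (Real.rpow_le_rpow_iff (hs n) (half_pos hc).le hα).1 hn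
  set ε := -m / 2 with hε_def
  have hε : 0 < ε := by linarith
  have hstep : ∀ᶠ n in atTop, Real.log (x (n + 1)) ≤
      Real.log (x n) + (Real.log (r (n + 1)) + ε) + s n ^ α / (c / 2 * ε) ^ α := by
    filter_upwards [(tendsto_add_atTop_nat 1).eventually hev, hs_small] with n hcx hsn
    have hca : c / 2 ≤ x n * r (n + 1) := by linarith [hrec n]
    have := Real.log_add_le_add_rpow (half_pos hc) hca (hs n) hsn hε hα.le
    rw [Real.log_mul (hxpos n).ne' (hr _).ne'] at this
    rw [hrec n]
    linarith
  obtain ⟨N, hN⟩ := eventually_atTop.1 hstep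
  have hlogx : Tendsto (fun n => Real.log (x n)) atTop atBot :=
    tendsto_atBot_of_succ_le_add_summable hN
      (fun n => div_nonneg (Real.rpow_nonneg (hs n) α) (Real.rpow_nonneg (by positivity) α)) (hs_sum.div_const _)
      (tendsto_sum_range_atBot_of_cesaro (tendsto_cesaro_add_const hlog ε) (by linarith))
  obtain ⟨n, hlt, hle⟩ := ((hlogx.eventually_lt_atBot (Real.log c)).and hev).exists
  exact (Real.log_le_log hc hle).not_gt hlt

theorem liminf_zero
    {Ω : Type*} [MeasurableSpace Ω] (μ : Measure Ω) [IsProbabilityMeasure μ]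
    (ξ : ℕ → Ω → ℝ) (hξ_meas : ∀ n, Measurable (ξ n))
    (hξ_indep : iIndepFun ξ μ)
    (hξ_ident : ∀ n m, Measure.map (ξ n) μ = Measure.map (ξ m) μ)
    (hξ_pos : ∀ n, ∀ᵐ ω ∂μ, 0 < 1 + ξ n ω)
    (hint_log : ∀ n, Integrable (fun ω => Real.log (1 + ξ n ω)) μ)
    (hlog_neg : ∀ n, ∫ ω, Real.log (1 + ξ n ω) ∂μ < 0)
    (S : ℕ → ℝ) (hS : ∀ n, 0 < S n)
    (α : ℝ) (hα : 0 < α) (hS_sum : Summable fun n => S n ^ α)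
    (X : ℕ → Ω → ℝ) (X₀ : ℝ) (hX₀ : 0 < X₀) (hX0 : ∀ ω, X 0 ω = X₀)
    (hrec : ∀ n ω, X (n + 1) ω = X n ω * (1 + ξ (n + 1) ω) + S n) :
    ∀ᵐ ω ∂μ, liminf (fun n => X n ω) atTop = 0 := by
  have hg : Measurable fun x : ℝ => Real.log (1 + x) := by fun_prop
  have hslln : ∀ᵐ ω ∂μ, Tendsto (fun n : ℕ => (∑ i ∈ range n, Real.log (1 + ξ (i + 1) ω)) / n)
      atTop (𝓝 (∫ ω, Real.log (1 + ξ 1 ω) ∂μ)) :=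
    strong_law_ae_real (fun i ω => Real.log (1 + ξ (i + 1) ω)) (hint_log 1)
      (fun i j hij => (hξ_indep.indepFun (Nat.succ_injective.ne hij)).comp hg hg)
      (fun i => (IdentDistrib.mk (hξ_meas _).aemeasurable (hξ_meas 1).aemeasurable
        (hξ_ident _ 1)).comp hg)
  filter_upwards [ae_all_iff.2 hξ_pos, hslln] with ω hpos hlim
  exact liminf_eq_zero_of_cesaro_log_neg hα ((hX0 ω).symm ▸ hX₀) hpos (fun n => (hS n).le)
    hS_sum (fun n => hrec n ω) hlim (hlog_neg 1)
end

section
/- Let f: ℝ → [0,1] be continuous with f(u) = 0 iff u = 0, let ξ_n be independent integrable random variables with 1 + ξ_n > 0 a.s., let S_n > 0 with Σ_n S_n < ∞, X_0 > 0, and X_{n+1} = X_n(1 + f(X_n) ξ_{n+1}) + S_n (so X_n > 0 for all n). If Σ_n [E ξ_n]^+ < ∞, then X_n converges a.s. to a finite limit; if in addition Σ_n [E ξ_n]^− = −∞, then X_n → 0 a.s. -/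
/-!
Write `e n = 𝔼 ξ n`, `e⁺ = max e 0` and `e⁻ = -min e 0`. Independence of `ξ (n + 1)` from the
past gives `𝔼[X (n+1) | ℱ n] = X n + X n f(X n) e (n+1) + S n ≤ (1 + e⁺) X n - X n f(X n) e⁻ + S n`,
which is the setting of the Robbins–Siegmund theorem: after discounting by `∏ (1 + e⁺)` and
compensating with the decrements and the tail of `∑ S`, one obtains a nonnegative supermartingale.
Hence `X n` converges a.s. and `∑ X n f(X n) e⁻ (n+1) < ∞` a.s. A nonzero limit `l` would make
`X n f(X n) → l f(l) ≠ 0`, forcing `∑ e⁻ < ∞`.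
-/

open MeasureTheory ProbabilityTheory Filter Finset Topology

noncomputable def prodOneAdd (a : ℕ → ℝ) (n : ℕ) : ℝ := ∏ k ∈ range n, (1 + a k)

section prodOneAdd

variable {a : ℕ → ℝ}

lemma prodOneAdd_succ (a : ℕ → ℝ) (n : ℕ) :
    prodOneAdd a (n + 1) = prodOneAdd a n * (1 + a n) :=
  prod_range_succ _ _

lemma one_le_prodOneAdd (ha : ∀ n, 0 ≤ a n) (n : ℕ) : 1 ≤ prodOneAdd a n :=
  one_le_prod fun k _ => le_add_of_nonneg_right (ha k)

lemma prodOneAdd_pos (ha : ∀ n, 0 ≤ a n) (n : ℕ) : 0 < prodOneAdd a n :=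
  zero_lt_one.trans_le (one_le_prodOneAdd ha n)

lemma prodOneAdd_le_exp_tsum (ha : ∀ n, 0 ≤ a n) (ha_sum : Summable a) (n : ℕ) :
    prodOneAdd a n ≤ Real.exp (∑' k, a k) :=
  (Real.prod_one_add_le_exp_sum _ ha).trans
    (Real.exp_le_exp.2 (ha_sum.sum_le_tsum _ fun k _ => ha k))

lemma tendsto_prodOneAdd (ha_sum : Summable a) :
    Tendsto (prodOneAdd a) atTop (𝓝 (∏' k, (1 + a k))) :=
  (Real.multipliable_one_add_of_summable ha_sum).tendsto_prod_tprod_nat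

end prodOneAdd

/-- The Lyapunov function of the Robbins–Siegmund theorem. Its bracketed part is predictable (at
time `n + 1` it involves `c` only up to time `n`), so only the first summand needs conditioning. -/
noncomputable def robbinsSiegmundLyapunov (x c a s : ℕ → ℝ) (n : ℕ) : ℝ :=
  (prodOneAdd a n)⁻¹ * x n + (∑ k ∈ range n, c k / prodOneAdd a (k + 1) + ∑' k, s (k + n))

section robbinsSiegmundLyapunov

variable {x c a s : ℕ → ℝ}

lemma tsum_nat_add_eq_add_tsum_nat_add_succ (hs : Summable s) (n : ℕ) :
    ∑' k, s (k + n) = s n + ∑' k, s (k + (n + 1)) := by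
  rw [((summable_nat_add_iff n).2 hs).tsum_eq_zero_add]
  simp only [zero_add, add_right_comm _ 1 n, add_assoc]

lemma robbinsSiegmundLyapunov_step (ha : ∀ n, 0 ≤ a n) (hs : ∀ n, 0 ≤ s n) (hs_sum : Summable s)
    {n : ℕ} {y : ℝ} (hy : y ≤ (1 + a n) * x n - c n + s n) :
    (prodOneAdd a (n + 1))⁻¹ * y
        + (∑ k ∈ range (n + 1), c k / prodOneAdd a (k + 1) + ∑' k, s (k + (n + 1)))
      ≤ robbinsSiegmundLyapunov x c a s n := by
  have hA := prodOneAdd_pos ha n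
  have ha' : 0 < 1 + a n := by linarith [ha n]
  have hsA : s n / prodOneAdd a (n + 1) ≤ s n :=
    div_le_self (hs n) (one_le_prodOneAdd ha (n + 1))
  calc (prodOneAdd a (n + 1))⁻¹ * y
        + (∑ k ∈ range (n + 1), c k / prodOneAdd a (k + 1) + ∑' k, s (k + (n + 1)))
      ≤ (prodOneAdd a (n + 1))⁻¹ * ((1 + a n) * x n - c n + s n)
        + (∑ k ∈ range (n + 1), c k / prodOneAdd a (k + 1) + ∑' k, s (k + (n + 1))) := by
        gcongr
        exact inv_nonneg.2 (prodOneAdd_pos ha _).le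
    _ = (prodOneAdd a n)⁻¹ * x n + s n / prodOneAdd a (n + 1)
        + (∑ k ∈ range n, c k / prodOneAdd a (k + 1) + ∑' k, s (k + (n + 1))) := by
        rw [sum_range_succ, prodOneAdd_succ]
        field_simp
        ring
    _ ≤ robbinsSiegmundLyapunov x c a s n := by
        rw [robbinsSiegmundLyapunov, tsum_nat_add_eq_add_tsum_nat_add_succ hs_sum n]
        linarith

lemma sum_range_div_prodOneAdd_le_robbinsSiegmundLyapunov (hx : ∀ n, 0 ≤ x n)
    (ha : ∀ n, 0 ≤ a n) (hs : ∀ n, 0 ≤ s n) (n : ℕ) :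
    ∑ k ∈ range n, c k / prodOneAdd a (k + 1) ≤ robbinsSiegmundLyapunov x c a s n := by
  have := mul_nonneg (inv_nonneg.2 (prodOneAdd_pos ha n).le) (hx n)
  have : 0 ≤ ∑' k, s (k + n) := tsum_nonneg fun k => hs (k + n)
  unfold robbinsSiegmundLyapunov
  linarith

lemma robbinsSiegmundLyapunov_nonneg (hx : ∀ n, 0 ≤ x n) (hc : ∀ n, 0 ≤ c n)
    (ha : ∀ n, 0 ≤ a n) (hs : ∀ n, 0 ≤ s n) (n : ℕ) :
    0 ≤ robbinsSiegmundLyapunov x c a s n :=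
  (sum_nonneg fun k _ => div_nonneg (hc k) (prodOneAdd_pos ha _).le).trans
    (sum_range_div_prodOneAdd_le_robbinsSiegmundLyapunov hx ha hs n)

theorem tendsto_and_summable_of_tendsto_robbinsSiegmundLyapunov (hx : ∀ n, 0 ≤ x n)
    (hc : ∀ n, 0 ≤ c n) (ha : ∀ n, 0 ≤ a n) (ha_sum : Summable a) (hs : ∀ n, 0 ≤ s n)
    {v : ℝ} (hv : Tendsto (robbinsSiegmundLyapunov x c a s) atTop (𝓝 v)) :
    (∃ l, Tendsto x atTop (𝓝 l)) ∧ Summable c := by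
  obtain ⟨M, hM⟩ := hv.bddAbove_range
  have hdisc : Summable fun k => c k / prodOneAdd a (k + 1) :=
    summable_of_sum_range_le (fun k => div_nonneg (hc k) (prodOneAdd_pos ha _).le) fun n =>
      (sum_range_div_prodOneAdd_le_robbinsSiegmundLyapunov hx ha hs n).trans (hM ⟨n, rfl⟩)
  refine ⟨?_, ?_⟩
  · have hxA := (hv.sub hdisc.hasSum.tendsto_sum_nat).sub (tendsto_sum_nat_add s)
    refine ⟨_, (hxA.mul (tendsto_prodOneAdd ha_sum)).congr fun n => ?_⟩
    simp only [robbinsSiegmundLyapunov]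
    field_simp [(prodOneAdd_pos ha n).ne']
    ring
  · refine hdisc.mul_left (Real.exp (∑' k, a k)) |>.of_nonneg_of_le hc fun k => ?_
    rw [mul_div_assoc', le_div_iff₀ (prodOneAdd_pos ha _), mul_comm]
    exact mul_le_mul_of_nonneg_right (prodOneAdd_le_exp_tsum ha ha_sum _) (hc k)

end robbinsSiegmundLyapunov

section RobbinsSiegmund

variable {Ω : Type*} {m0 : MeasurableSpace Ω} {μ : Measure Ω} [IsFiniteMeasure μ]
  {ℱ : Filtration ℕ m0}

theorem MeasureTheory.Supermartingale.exists_ae_tendsto_of_nonneg_s16 {V : ℕ → Ω → ℝ}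
    (hV : Supermartingale V ℱ μ) (hV0 : ∀ n, 0 ≤ᵐ[μ] V n) :
    ∀ᵐ ω ∂μ, ∃ v, Tendsto (V · ω) atTop (𝓝 v) := by
  have hbdd : ∀ n, eLpNorm ((-V) n) 1 μ ≤ ENNReal.ofReal (∫ ω, V 0 ω ∂μ) := fun n => by
    rw [Pi.neg_apply, eLpNorm_neg, eLpNorm_one_eq_lintegral_enorm,
      ← ofReal_integral_norm_eq_lintegral_enorm (hV.integrable n)]
    refine ENNReal.ofReal_le_ofReal ?_
    calc ∫ ω, ‖V n ω‖ ∂μ = ∫ ω, V n ω ∂μ :=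
          integral_congr_ae <| (hV0 n).mono fun ω hω => Real.norm_of_nonneg hω
      _ ≤ ∫ ω, V 0 ω ∂μ := by
          simpa using hV.setIntegral_le (Nat.zero_le n) MeasurableSet.univ
  filter_upwards [hV.neg.exists_ae_tendsto_of_bdd hbdd] with ω ⟨v, hv⟩
  exact ⟨-v, by simpa using hv.neg⟩

variable {X c : ℕ → Ω → ℝ} {a s : ℕ → ℝ}

theorem supermartingale_robbinsSiegmundLyapunov (hX : StronglyAdapted ℱ X)
    (hX_int : ∀ n, Integrable (X n) μ) (hc : StronglyAdapted ℱ c)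
    (hc_int : ∀ n, Integrable (c n) μ) (ha : ∀ n, 0 ≤ a n) (hs : ∀ n, 0 ≤ s n)
    (hs_sum : Summable s)
    (hstep : ∀ n, μ[X (n + 1)|ℱ n] ≤ᵐ[μ] fun ω => (1 + a n) * X n ω - c n ω + s n) :
    Supermartingale (fun n ω => robbinsSiegmundLyapunov (X · ω) (c · ω) a s n) ℱ μ := by
  set Q : ℕ → Ω → ℝ := fun n ω =>
    ∑ k ∈ range n, c k ω / prodOneAdd a (k + 1) + ∑' k, s (k + n)
  have hQ_meas : ∀ n m, n ≤ m + 1 → StronglyMeasurable[ℱ m] (Q n) := fun n m hnm =>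
    ((measurable_sum _ fun k hk => (((hc k).mono (ℱ.mono (by
      simp only [mem_range] at hk; omega))).measurable.div_const _)).add_const _).stronglyMeasurable
  have hQ_int : ∀ n, Integrable (Q n) μ := fun n =>
    (integrable_finsetSum _ fun k _ => (hc_int k).div_const _).add (integrable_const _)
  have hV_int : ∀ n, Integrable ((prodOneAdd a n)⁻¹ • X n + Q n) μ := fun n =>
    ((hX_int n).smul _).add (hQ_int n)
  change Supermartingale (fun n => (prodOneAdd a n)⁻¹ • X n + Q n) ℱ μ
  refine supermartingale_nat (fun n => ((hX n).const_smul _).add (hQ_meas n n n.le_succ))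
    hV_int fun n => ?_
  filter_upwards
    [condExp_add ((hX_int (n + 1)).smul (prodOneAdd a (n + 1))⁻¹) (hQ_int (n + 1)) (ℱ n),
    condExp_smul (prodOneAdd a (n + 1))⁻¹ (X (n + 1)) (ℱ n), hstep n] with ω hadd hsmul hle
  rw [hadd, Pi.add_apply, hsmul, condExp_of_stronglyMeasurable (ℱ.le n) (hQ_meas _ _ le_rfl)
    (hQ_int _)]
  exact robbinsSiegmundLyapunov_step (x := (X · ω)) (c := (c · ω)) ha hs hs_sum hle

theorem robbins_siegmund_s16 (hX : StronglyAdapted ℱ X)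
    (hX_int : ∀ n, Integrable (X n) μ) (hX0 : ∀ n, 0 ≤ᵐ[μ] X n) (hc : StronglyAdapted ℱ c)
    (hc_int : ∀ n, Integrable (c n) μ) (hc0 : ∀ n, 0 ≤ᵐ[μ] c n) (ha : ∀ n, 0 ≤ a n)
    (ha_sum : Summable a) (hs : ∀ n, 0 ≤ s n) (hs_sum : Summable s)
    (hstep : ∀ n, μ[X (n + 1)|ℱ n] ≤ᵐ[μ] fun ω => (1 + a n) * X n ω - c n ω + s n) :
    ∀ᵐ ω ∂μ, (∃ l, Tendsto (X · ω) atTop (𝓝 l)) ∧ Summable (c · ω) := by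
  have hV := supermartingale_robbinsSiegmundLyapunov hX hX_int hc hc_int ha hs hs_sum hstep
  have hV0 : ∀ n, 0 ≤ᵐ[μ] fun ω => robbinsSiegmundLyapunov (X · ω) (c · ω) a s n := fun n => by
    filter_upwards [ae_all_iff.2 hX0, ae_all_iff.2 hc0] with ω hx hc
    exact robbinsSiegmundLyapunov_nonneg hx hc ha hs n
  filter_upwards [hV.exists_ae_tendsto_of_nonneg_s16 hV0, ae_all_iff.2 hX0, ae_all_iff.2 hc0]
    with ω ⟨v, hv⟩ hx hc
  exact tendsto_and_summable_of_tendsto_robbinsSiegmundLyapunov hx hc ha ha_sum hs hv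

end RobbinsSiegmund

section Independence

variable {Ω ι : Type*} {m0 : MeasurableSpace Ω} {μ : Measure Ω} [LinearOrder ι]
  {ξ : ι → Ω → ℝ} {i j : ι} {Y : Ω → ℝ}

lemma ProbabilityTheory.iIndepFun.integrable_mul_natural_of_lt (hξ : ∀ i, StronglyMeasurable (ξ i))
    (hind : iIndepFun ξ μ) (hij : i < j) (hY : StronglyMeasurable[Filtration.natural ξ hξ i] Y)
    (hY_int : Integrable Y μ) (hξ_int : Integrable (ξ j) μ) : Integrable (Y * ξ j) μ := by
  refine IndepFun.integrable_mul ?_ hY_int hξ_int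
  rw [IndepFun_iff_Indep]
  exact indep_of_indep_of_le_left (hind.indep_comap_natural_of_lt hξ hij).symm
    hY.measurable.comap_le

lemma ProbabilityTheory.iIndepFun.condExp_mul_natural_ae_eq_of_lt
    (hξ : ∀ i, StronglyMeasurable (ξ i))
    (hind : iIndepFun ξ μ) (hij : i < j) (hY : StronglyMeasurable[Filtration.natural ξ hξ i] Y)
    (hY_int : Integrable Y μ) (hξ_int : Integrable (ξ j) μ) :
    μ[Y * ξ j|Filtration.natural ξ hξ i] =ᵐ[μ] fun ω => Y ω * μ[ξ j] := by
  filter_upwards [condExp_mul_of_stronglyMeasurable_left hY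
      (hind.integrable_mul_natural_of_lt hξ hij hY hY_int hξ_int) hξ_int,
    hind.condExp_natural_ae_eq_of_lt hξ hij] with ω hmul hξj
  rw [hmul, Pi.mul_apply, hξj]

end Independence

lemma MeasureTheory.Integrable.mul_comp_of_norm_le {Ω : Type*} {m0 : MeasurableSpace Ω}
    {μ : Measure Ω} {Y : Ω → ℝ} {f : ℝ → ℝ} {C : ℝ} (hY : Integrable Y μ) (hf : Continuous f)
    (hf_le : ∀ u, ‖f u‖ ≤ C) : Integrable (fun ω => Y ω * f (Y ω)) μ :=
  hY.mul_bdd (hf.comp_aestronglyMeasurable hY.1) (ae_of_all _ fun _ => hf_le _)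

lemma add_mul_le_one_add_max_mul_sub {x w e : ℝ} (hw : w ≤ x) :
    x + w * e ≤ (1 + max e 0) * x - w * -min e 0 := by
  have he : w * e = w * max e 0 + w * min e 0 := by rw [← mul_add, max_add_min, add_zero]
  nlinarith [mul_nonneg (sub_nonneg.2 hw) (le_max_right e 0)]

section Recursion

variable {f : ℝ → ℝ} {S : ℕ → ℝ}

lemma one_add_mul_pos {t y : ℝ} (ht : t ∈ Set.Icc (0 : ℝ) 1) (hy : 0 < 1 + y) :
    0 < 1 + t * y := by
  obtain ⟨ht0, ht1⟩ := ht
  rcases le_or_gt 0 y with h | h <;> nlinarith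

lemma recursion_pos (hf : ∀ u, f u ∈ Set.Icc (0 : ℝ) 1) {x y : ℕ → ℝ} (hy : ∀ n, 0 < 1 + y n)
    (hS : ∀ n, 0 ≤ S n) (hx0 : 0 < x 0)
    (hrec : ∀ n, x (n + 1) = x n * (1 + f (x n) * y (n + 1)) + S n) (n : ℕ) : 0 < x n := by
  induction n with
  | zero => exact hx0
  | succ n ih =>
    rw [hrec]
    have := mul_pos ih (one_add_mul_pos (hf (x n)) (hy (n + 1)))
    linarith [hS n]

variable {Ω : Type*} {m0 : MeasurableSpace Ω} {ξ X : ℕ → Ω → ℝ}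

lemma recursion_succ_eq
    (hrec : ∀ n ω, X (n + 1) ω = X n ω * (1 + f (X n ω) * ξ (n + 1) ω) + S n) (n : ℕ) :
    X (n + 1) = X n + (fun ω => X n ω * f (X n ω)) * ξ (n + 1) + fun _ => S n := by
  ext ω
  simp only [hrec, Pi.add_apply, Pi.mul_apply]
  ring

lemma stronglyAdapted_of_recursion {ℱ : Filtration ℕ m0} (hξ : StronglyAdapted ℱ ξ)
    (hf : Continuous f) {X₀ : ℝ} (hX0 : ∀ ω, X 0 ω = X₀)
    (hrec : ∀ n ω, X (n + 1) ω = X n ω * (1 + f (X n ω) * ξ (n + 1) ω) + S n) :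
    StronglyAdapted ℱ X := by
  intro n
  induction n with
  | zero => simpa only [funext hX0] using stronglyMeasurable_const
  | succ n ih =>
    have hXn := ih.mono (ℱ.mono n.le_succ)
    rw [recursion_succ_eq hrec]
    exact (hXn.add ((hXn.mul (hf.comp_stronglyMeasurable hXn)).mul (hξ (n + 1)))).add
      stronglyMeasurable_const

variable {μ : Measure Ω}

lemma integrable_of_recursion (hξ : ∀ n, StronglyMeasurable (ξ n)) (hind : iIndepFun ξ μ)
    (hξ_int : ∀ n, Integrable (ξ n) μ) (hf : Continuous f) (hf_le : ∀ u, ‖f u‖ ≤ 1)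
    {X₀ : ℝ} (hX0 : ∀ ω, X 0 ω = X₀)
    (hrec : ∀ n ω, X (n + 1) ω = X n ω * (1 + f (X n ω) * ξ (n + 1) ω) + S n) (n : ℕ) :
    Integrable (X n) μ := by
  have := hind.isProbabilityMeasure
  have hX := stronglyAdapted_of_recursion (Filtration.stronglyAdapted_natural hξ) hf hX0 hrec
  induction n with
  | zero => simpa only [funext hX0] using integrable_const X₀
  | succ n ih =>
    rw [recursion_succ_eq hrec]
    exact (ih.add (hind.integrable_mul_natural_of_lt hξ (Nat.lt_add_one n)
      ((hX n).mul (hf.comp_stronglyMeasurable (hX n))) (ih.mul_comp_of_norm_le hf hf_le)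
      (hξ_int _))).add (integrable_const _)

lemma condExp_recursion_succ (hξ : ∀ n, StronglyMeasurable (ξ n)) (hind : iIndepFun ξ μ)
    (hξ_int : ∀ n, Integrable (ξ n) μ) (hf : Continuous f) (hf_le : ∀ u, ‖f u‖ ≤ 1)
    {X₀ : ℝ} (hX0 : ∀ ω, X 0 ω = X₀)
    (hrec : ∀ n ω, X (n + 1) ω = X n ω * (1 + f (X n ω) * ξ (n + 1) ω) + S n) (n : ℕ) :
    μ[X (n + 1)|Filtration.natural ξ hξ n] =ᵐ[μ]
      fun ω => X n ω + X n ω * f (X n ω) * μ[ξ (n + 1)] + S n := by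
  have := hind.isProbabilityMeasure
  have hX := stronglyAdapted_of_recursion (Filtration.stronglyAdapted_natural hξ) hf hX0 hrec
  have hX_int := integrable_of_recursion hξ hind hξ_int hf hf_le hX0 hrec
  have hW : StronglyMeasurable[Filtration.natural ξ hξ n] fun ω => X n ω * f (X n ω) :=
    (hX n).mul (hf.comp_stronglyMeasurable (hX n))
  have hW_int := (hX_int n).mul_comp_of_norm_le hf hf_le
  have hWξ_int :=
    hind.integrable_mul_natural_of_lt hξ (Nat.lt_add_one n) hW hW_int (hξ_int (n + 1))
  rw [recursion_succ_eq hrec]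
  filter_upwards [condExp_add ((hX_int n).add hWξ_int) (integrable_const (S n))
      (Filtration.natural ξ hξ n),
    condExp_add (hX_int n) hWξ_int (Filtration.natural ξ hξ n),
    hind.condExp_mul_natural_ae_eq_of_lt hξ (Nat.lt_add_one n) hW hW_int (hξ_int (n + 1))]
    with ω h₁ h₂ h₃
  rw [h₁, Pi.add_apply, h₂, Pi.add_apply, h₃,
    condExp_of_stronglyMeasurable (Filtration.le _ n) (hX n) (hX_int n),
    condExp_const (Filtration.le _ n)]

lemma ae_tendsto_and_summable_of_recursion (hξ : ∀ n, StronglyMeasurable (ξ n))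
    (hind : iIndepFun ξ μ) (hξ_int : ∀ n, Integrable (ξ n) μ)
    (hξ_pos : ∀ n, ∀ᵐ ω ∂μ, 0 < 1 + ξ n ω) (hf : Continuous f)
    (hf_range : ∀ u, f u ∈ Set.Icc (0 : ℝ) 1) (hS : ∀ n, 0 < S n) (hS_sum : Summable S)
    {X₀ : ℝ} (hX₀ : 0 < X₀) (hX0 : ∀ ω, X 0 ω = X₀)
    (hrec : ∀ n ω, X (n + 1) ω = X n ω * (1 + f (X n ω) * ξ (n + 1) ω) + S n)
    (hpos_sum : Summable fun n => max μ[ξ n] 0) :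
    ∀ᵐ ω ∂μ, (∃ l, Tendsto (X · ω) atTop (𝓝 l)) ∧
      Summable fun n => X n ω * f (X n ω) * -min μ[ξ (n + 1)] 0 := by
  have := hind.isProbabilityMeasure
  have hf_le : ∀ u, ‖f u‖ ≤ 1 := fun u => by
    rw [Real.norm_of_nonneg (hf_range u).1]; exact (hf_range u).2
  have hX := stronglyAdapted_of_recursion (Filtration.stronglyAdapted_natural hξ) hf hX0 hrec
  have hX_int := integrable_of_recursion hξ hind hξ_int hf hf_le hX0 hrec
  have hX_pos : ∀ᵐ ω ∂μ, ∀ n, 0 < X n ω := (ae_all_iff.2 hξ_pos).mono fun ω hω =>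
    recursion_pos hf_range hω (fun n => (hS n).le) ((hX0 ω).symm ▸ hX₀) (hrec · ω)
  have hd : ∀ n, 0 ≤ -min μ[ξ (n + 1)] 0 := fun n => neg_nonneg.2 (min_le_right _ _)
  refine robbins_siegmund_s16 hX hX_int (fun n => hX_pos.mono fun ω h => (h n).le)
    (fun n => ((hX n).mul (hf.comp_stronglyMeasurable (hX n))).mul_const _)
    (fun n => ((hX_int n).mul_comp_of_norm_le hf hf_le).mul_const _)
    (fun n => hX_pos.mono fun ω h => mul_nonneg (mul_nonneg (h n).le (hf_range _).1) (hd n))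
    (fun n => le_max_right _ _) ((summable_nat_add_iff 1).2 hpos_sum) (fun n => (hS n).le)
    hS_sum fun n => ?_
  filter_upwards [condExp_recursion_succ hξ hind hξ_int hf hf_le hX0 hrec n, hX_pos]
    with ω hcond hpos
  rw [hcond]
  gcongr
  exact add_mul_le_one_add_max_mul_sub (mul_le_of_le_one_right (hpos n).le (hf_range _).2)

end Recursion

lemma summable_of_summable_mul_of_tendsto {u d : ℕ → ℝ} {L : ℝ} (hu : Tendsto u atTop (𝓝 L))
    (hL : L ≠ 0) (h : Summable fun n => u n * d n) : Summable d := by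
  refine summable_of_isBigO_nat h ?_
  have hinv :=
    ((hu.inv₀ hL).isBigO_one ℝ).mul (Asymptotics.isBigO_refl (fun n => u n * d n) atTop)
  refine (hinv.congr' ?_ (by simp)).trans (Asymptotics.isBigO_refl _ _)
  filter_upwards [hu.eventually_ne hL] with n hn
  field_simp

lemma eq_zero_of_tendsto_of_summable_mul_comp {f : ℝ → ℝ} (hf : Continuous f)
    (hf_zero : ∀ u, f u = 0 → u = 0) {x d : ℕ → ℝ} {l : ℝ} (hx : Tendsto x atTop (𝓝 l))
    (hd : ¬ Summable d) (h : Summable fun n => x n * f (x n) * d n) : l = 0 := by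
  by_contra hl
  exact hd (summable_of_summable_mul_of_tendsto (hx.mul ((hf.tendsto l).comp hx))
    (mul_ne_zero hl (mt (hf_zero l) hl)) h)

theorem nonlinear_summable_convergence_general
    {Ω : Type*} [MeasurableSpace Ω] (μ : Measure Ω)
    (f : ℝ → ℝ) (hf_cont : Continuous f) (hf_range : ∀ u, f u ∈ Set.Icc (0 : ℝ) 1)
    (hf_zero : ∀ u, f u = 0 ↔ u = 0)
    (ξ : ℕ → Ω → ℝ) (hξ_meas : ∀ n, Measurable (ξ n))
    (hξ_indep : iIndepFun ξ μ)
    (hξ_pos : ∀ n, ∀ᵐ ω ∂μ, 0 < 1 + ξ n ω)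
    (hξ_int : ∀ n, Integrable (ξ n) μ)
    (S : ℕ → ℝ) (hS : ∀ n, 0 < S n) (hS_sum : Summable S)
    (X : ℕ → Ω → ℝ) (X₀ : ℝ) (hX₀ : 0 < X₀) (hX0 : ∀ ω, X 0 ω = X₀)
    (hrec : ∀ n ω, X (n + 1) ω = X n ω * (1 + f (X n ω) * ξ (n + 1) ω) + S n)
    (hpos_sum : Summable fun n => max (∫ ω, ξ n ω ∂μ) 0) :
    (∀ᵐ ω ∂μ, ∃ l : ℝ, Tendsto (fun n => X n ω) atTop (nhds l)) ∧
      ((Tendsto (fun N => ∑ n ∈ Finset.range N, min (∫ ω, ξ n ω ∂μ) 0)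
          atTop atBot) →
        ∀ᵐ ω ∂μ, Tendsto (fun n => X n ω) atTop (nhds 0)) := by
  have hX := ae_tendsto_and_summable_of_recursion (fun n => (hξ_meas n).stronglyMeasurable)
    hξ_indep hξ_int hξ_pos hf_cont hf_range hS hS_sum hX₀ hX0 hrec hpos_sum
  refine ⟨hX.mono fun ω h => h.1, fun hdiv => ?_⟩
  have hd : ¬ Summable fun n => -min (∫ ω, ξ (n + 1) ω ∂μ) 0 := fun hsum =>
    not_tendsto_atBot_of_tendsto_nhds
      ((summable_nat_add_iff 1 (f := fun n => min (∫ ω, ξ n ω ∂μ) 0)).1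
        (summable_neg_iff.1 hsum)).hasSum.tendsto_sum_nat hdiv
  filter_upwards [hX] with ω ⟨⟨l, hl⟩, hsum⟩
  rwa [← eq_zero_of_tendsto_of_summable_mul_comp hf_cont (fun u => (hf_zero u).1) hl hd hsum]

theorem nonlinear_summable_convergence
    {Ω : Type*} [MeasurableSpace Ω] (μ : Measure Ω) [IsProbabilityMeasure μ]
    (f : ℝ → ℝ) (hf_cont : Continuous f) (hf_range : ∀ u, f u ∈ Set.Icc (0 : ℝ) 1)
    (hf_zero : ∀ u, f u = 0 ↔ u = 0)
    (ξ : ℕ → Ω → ℝ) (hξ_meas : ∀ n, Measurable (ξ n))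
    (hξ_indep : iIndepFun ξ μ)
    (hξ_pos : ∀ n, ∀ᵐ ω ∂μ, 0 < 1 + ξ n ω)
    (hξ_int : ∀ n, Integrable (ξ n) μ)
    (S : ℕ → ℝ) (hS : ∀ n, 0 < S n) (hS_sum : Summable S)
    (X : ℕ → Ω → ℝ) (X₀ : ℝ) (hX₀ : 0 < X₀) (hX0 : ∀ ω, X 0 ω = X₀)
    (hrec : ∀ n ω, X (n + 1) ω = X n ω * (1 + f (X n ω) * ξ (n + 1) ω) + S n)
    (hpos_sum : Summable fun n => max (∫ ω, ξ n ω ∂μ) 0) :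
    (∀ᵐ ω ∂μ, ∃ l : ℝ, Tendsto (fun n => X n ω) atTop (nhds l)) ∧
      ((Tendsto (fun N => ∑ n ∈ Finset.range N, min (∫ ω, ξ n ω ∂μ) 0)
          atTop atBot) →
        ∀ᵐ ω ∂μ, Tendsto (fun n => X n ω) atTop (nhds 0)) :=
  nonlinear_summable_convergence_general μ f hf_cont hf_range hf_zero ξ hξ_meas hξ_indep hξ_pos
    hξ_int S hS hS_sum X X₀ hX₀ hX0 hrec hpos_sum
end

section
/- Let f: ℝ → [0,1] be continuous with f(u) = 0 iff u = 0, let ξ_n be i.i.d. bounded random variables with −1 < −k₀ ≤ ξ_n ≤ L and E ξ_n > 0, let S_n > 0 be non-random, X_0 > 0, and X_{n+1} = X_n(1 + f(X_n) ξ_{n+1}) + S_n. Then P(X_n → 0) = 0. -/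
/-!
On the event `X → 0`, the path eventually stays where `f ≤ δ`, and for small `δ` the bounded
noise with positive mean makes `𝔼[(1 + a ξ)⁻¹] ≤ 1` for all `a ∈ [0, δ]` (second-order Taylor
expansion: the drift `a 𝔼 ξ` beats the quadratic term). Since `X_{n+1} ≥ X_n (1 + f(X_n) ξ_{n+1})`
and `ξ_{n+1}` is independent of the past, `1 / X_n` killed on leaving `{f ≤ δ}` is a nonnegative
supermartingale with bounded expectations. By Fatou's lemma it is a.s. finite in the limit,
whereas it tends to `∞` wherever `X → 0`.
-/

open MeasureTheory ProbabilityTheory Filter Topology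
open scoped ENNReal

section

variable {Ω α β : Type*} [MeasurableSpace Ω] [MeasurableSpace α] [MeasurableSpace β]
  {μ : Measure Ω}

theorem lintegral_comp_eq_lintegral_lintegral_of_indepFun [IsFiniteMeasure μ]
    {Y : Ω → α} {Z : Ω → β} (hY : Measurable Y) (hZ : Measurable Z) (hYZ : IndepFun Y Z μ)
    {H : α → β → ℝ≥0∞} (hH : Measurable (Function.uncurry H)) :
    ∫⁻ ω, H (Y ω) (Z ω) ∂μ = ∫⁻ ω, ∫⁻ z, H (Y ω) z ∂(μ.map Z) ∂μ := by
  calc ∫⁻ ω, H (Y ω) (Z ω) ∂μ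
      = ∫⁻ p, Function.uncurry H p ∂(μ.map fun ω => (Y ω, Z ω)) :=
        (lintegral_map hH (hY.prodMk hZ)).symm
    _ = ∫⁻ p, Function.uncurry H p ∂((μ.map Y).prod (μ.map Z)) := by
        rw [(indepFun_iff_map_prod_eq_prod_map_map hY.aemeasurable hZ.aemeasurable).1 hYZ]
    _ = ∫⁻ y, ∫⁻ z, H y z ∂(μ.map Z) ∂(μ.map Y) := lintegral_prod _ hH.aemeasurable
    _ = _ := lintegral_map hH.lintegral_prod_right' hY

theorem measure_setOf_tendsto_top_eq_zero {F : ℕ → Ω → ℝ≥0∞} (hF : ∀ N, Measurable (F N))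
    {C : ℝ≥0∞} (hC : C ≠ ∞) (hbound : ∀ᶠ N in atTop, ∫⁻ ω, F N ω ∂μ ≤ C) :
    μ {ω | Tendsto (fun N => F N ω) atTop (𝓝 ∞)} = 0 := by
  have hliminf : ∫⁻ ω, liminf (fun N => F N ω) atTop ∂μ ≠ ∞ :=
    ((lintegral_liminf_le hF).trans (liminf_le_of_frequently_le' hbound.frequently)).trans_lt
      hC.lt_top |>.ne
  refine measure_mono_null (fun ω hω => ?_) (ae_iff.1 (ae_lt_top (.liminf hF) hliminf))
  simp [(show Tendsto _ _ _ from hω).liminf_eq]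

variable {E : Type*} [TopologicalSpace E]
  [TopologicalSpace.MetrizableSpace E] [MeasurableSpace E] [BorelSpace E]
  {ξ : ℕ → Ω → E} (hξ : ∀ n, StronglyMeasurable (ξ n))

theorem ProbabilityTheory.iIndepFun.indepFun_succ_of_measurable_natural (hind : iIndepFun ξ μ)
    {N : ℕ} {Y : Ω → α}
    (hY : Measurable[Filtration.natural ξ hξ N] Y) : IndepFun Y (ξ (N + 1)) μ := by
  rw [IndepFun_iff_Indep]
  refine indep_of_indep_of_le_left ?_ hY.comap_le
  have := indep_iSup_of_disjoint (fun i => (hξ i).measurable.comap_le) hind.iIndep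
    (S := Set.Iic N) (T := {N + 1}) (by simp)
  simpa [Filtration.natural] using this

theorem measurable_natural_of_eq_succ {X : ℕ → Ω → α} {Φ : ℕ → α → E → α}
    (hΦ : ∀ n, Measurable (Function.uncurry (Φ n)))
    (h0 : Measurable[Filtration.natural ξ hξ 0] (X 0))
    (hrec : ∀ n ω, X (n + 1) ω = Φ n (X n ω) (ξ (n + 1) ω)) (N : ℕ) :
    Measurable[Filtration.natural ξ hξ N] (X N) := by
  induction N with
  | zero => exact h0
  | succ N ih =>
    rw [funext (hrec N)]
    exact (hΦ N).comp ((ih.mono (Filtration.mono _ N.le_succ) le_rfl).prodMk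
      ((Filtration.stronglyAdapted_natural hξ (N + 1)).measurable))

end

theorem inv_one_add_le_one_sub_add_two_mul_sq {u : ℝ} (hu : -(1 / 2) ≤ u) :
    (1 + u)⁻¹ ≤ 1 - u + 2 * u ^ 2 := by
  rw [inv_le_iff_one_le_mul₀ (by linarith)]
  nlinarith [sq_nonneg u]

theorem exists_lintegral_ofReal_inv_one_add_mul_le_one {Ω : Type*} [MeasurableSpace Ω]
    {μ : Measure Ω} [IsProbabilityMeasure μ] {Z : Ω → ℝ} {B : ℝ} (hZ : Measurable Z)
    (hB : ∀ᵐ ω ∂μ, |Z ω| ≤ B) (hmean : 0 < ∫ ω, Z ω ∂μ) :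
    ∃ δ > 0, ∀ a ∈ Set.Icc 0 δ, ∫⁻ ω, ENNReal.ofReal (1 + a * Z ω)⁻¹ ∂μ ≤ 1 := by
  set m := ∫ ω, Z ω ∂μ
  have hint : Integrable Z μ :=
    .of_bound hZ.aestronglyMeasurable B (by simpa only [Real.norm_eq_abs] using hB)
  have hB_pos : 0 < B := by
    have : m ≤ ∫ _, B ∂μ :=
      integral_mono_ae hint (integrable_const B) (hB.mono fun ω h => (le_abs_self _).trans h)
    simp only [integral_const, probReal_univ, smul_eq_mul, one_mul] at this
    linarith
  refine ⟨min (1 / (2 * B)) (m / (2 * B ^ 2)), by positivity, fun a ⟨ha0, haδ⟩ => ?_⟩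
  have haB : a * (2 * B) ≤ 1 := (le_div_iff₀ (by positivity)).1 (haδ.trans (min_le_left _ _))
  have haB2 : a * (2 * B ^ 2) ≤ m := (le_div_iff₀ (by positivity)).1 (haδ.trans (min_le_right _ _))
  -- Second-order Taylor bound, with the quadratic term absorbed by the drift `a * m`.
  have hpt : ∀ᵐ ω ∂μ, 0 ≤ 1 + a * m - a * Z ω ∧ (1 + a * Z ω)⁻¹ ≤ 1 + a * m - a * Z ω := by
    filter_upwards [hB] with ω hω
    have has : |a * Z ω| ≤ a * B := by
      rw [abs_mul, abs_of_nonneg ha0]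
      exact mul_le_mul_of_nonneg_left hω ha0
    have hsq : (a * Z ω) ^ 2 ≤ (a * B) ^ 2 := sq_le_sq' (abs_le.1 has).1 (abs_le.1 has).2
    have hu : -(1 / 2) ≤ a * Z ω := by linarith [(abs_le.1 has).1]
    refine ⟨by nlinarith [(abs_le.1 has).2, mul_nonneg ha0 hmean.le], ?_⟩
    nlinarith [inv_one_add_le_one_sub_add_two_mul_sq hu, mul_le_mul_of_nonneg_left haB2 ha0]
  calc ∫⁻ ω, ENNReal.ofReal (1 + a * Z ω)⁻¹ ∂μ
      ≤ ∫⁻ ω, ENNReal.ofReal (1 + a * m - a * Z ω) ∂μ :=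
        lintegral_mono_ae (hpt.mono fun ω h => ENNReal.ofReal_le_ofReal h.2)
    _ = ENNReal.ofReal (∫ ω, 1 + a * m - a * Z ω ∂μ) :=
        (ofReal_integral_eq_lintegral_ofReal ((integrable_const _).sub (hint.const_mul a))
          (hpt.mono fun ω h => h.1)).symm
    _ = 1 := by
        rw [integral_sub (integrable_const _) (hint.const_mul a), integral_const_mul]
        simp [m]

section Killed

variable {Ω : Type*} {f : ℝ → ℝ} {δ : ℝ} {X : ℕ → Ω → ℝ}

noncomputable def killedInv (f : ℝ → ℝ) (δ : ℝ) (X : ℕ → Ω → ℝ) (m N : ℕ) : Ω → ℝ≥0∞ :=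
  (⋂ n ∈ Finset.Icc m N, {ω | f (X n ω) ≤ δ}).indicator fun ω => ENNReal.ofReal (X N ω)⁻¹

theorem tendsto_killedInv_of_tendsto_zero {ω : Ω} (hX : Tendsto (fun n => X n ω) atTop (𝓝 0))
    (hpos : ∀ n, 0 < X n ω) (hf : ∀ᶠ x in 𝓝 0, f x ≤ δ) :
    ∃ m, Tendsto (fun N => killedInv f δ X m N ω) atTop (𝓝 ∞) := by
  obtain ⟨m, hm⟩ := eventually_atTop.1 (hX.eventually hf)
  refine ⟨m, (ENNReal.tendsto_ofReal_atTop.comp ((tendsto_inv_nhdsGT_zero (𝕜 := ℝ)).comp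
    (tendsto_nhdsWithin_iff.2 ⟨hX, .of_forall hpos⟩))).congr fun N => ?_⟩
  have hω : ω ∈ ⋂ n ∈ Finset.Icc m N, {ω | f (X n ω) ≤ δ} :=
    Set.mem_iInter₂.2 fun n hn => hm n (Finset.mem_Icc.1 hn).1
  exact (Set.indicator_of_mem hω fun ω => ENNReal.ofReal (X N ω)⁻¹).symm

variable [MeasurableSpace Ω]

theorem measurable_killedInv {𝓕 : Filtration ℕ ‹MeasurableSpace Ω›} (hf : Measurable f)
    (hX : ∀ n, Measurable[𝓕 n] (X n)) (m N : ℕ) : Measurable[𝓕 N] (killedInv f δ X m N) :=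
  ((hX N).inv.ennreal_ofReal).indicator <| Finset.measurableSet_biInter _ fun n hn =>
    measurableSet_le (hf.comp ((hX n).mono (𝓕.mono (Finset.mem_Icc.1 hn).2) le_rfl))
      measurable_const

variable {μ : Measure Ω} [IsFiniteMeasure μ] {ξ : ℕ → Ω → ℝ} (hξ : ∀ n, StronglyMeasurable (ξ n))

theorem lintegral_killedInv_succ_le (hind : iIndepFun ξ μ) (hf : Measurable f)
    (hf0 : ∀ x, 0 ≤ f x) (hX : ∀ n, Measurable[Filtration.natural ξ hξ n] (X n)) {m N : ℕ}
    (hδ : ∀ a ∈ Set.Icc 0 δ, ∫⁻ ω, ENNReal.ofReal (1 + a * ξ (N + 1) ω)⁻¹ ∂μ ≤ 1)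
    (hpos : ∀ᵐ ω ∂μ, 0 < X N ω ∧ 0 < 1 + f (X N ω) * ξ (N + 1) ω)
    (hle : ∀ ω, X N ω * (1 + f (X N ω) * ξ (N + 1) ω) ≤ X (N + 1) ω) (hmN : m ≤ N) :
    ∫⁻ ω, killedInv f δ X m (N + 1) ω ∂μ ≤ ∫⁻ ω, killedInv f δ X m N ω ∂μ := by
  set Y : Ω → ℝ≥0∞ × ℝ := fun ω => (killedInv f δ X m N ω, X N ω)
  set H : ℝ≥0∞ × ℝ → ℝ → ℝ≥0∞ := fun y s => y.1 * ENNReal.ofReal (1 + f y.2 * s)⁻¹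
  have hY : Measurable[Filtration.natural ξ hξ N] Y :=
    (measurable_killedInv hf hX m N).prodMk (hX N)
  have hH : Measurable (Function.uncurry H) := by unfold H; fun_prop
  calc ∫⁻ ω, killedInv f δ X m (N + 1) ω ∂μ
      ≤ ∫⁻ ω, H (Y ω) (ξ (N + 1) ω) ∂μ := by
        refine lintegral_mono_ae (hpos.mono fun ω ⟨hXN, hc⟩ => ?_)
        by_cases hω : ω ∈ ⋂ n ∈ Finset.Icc m (N + 1), {ω | f (X n ω) ≤ δ}
        · have hωN : ω ∈ ⋂ n ∈ Finset.Icc m N, {ω | f (X n ω) ≤ δ} :=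
            Set.mem_iInter₂.2 fun n hn => Set.mem_iInter₂.1 hω n
              (Finset.Icc_subset_Icc_right N.le_succ hn)
          simp only [H, Y, killedInv, Set.indicator_of_mem hω, Set.indicator_of_mem hωN]
          rw [← ENNReal.ofReal_mul (inv_nonneg.2 hXN.le), ← mul_inv]
          exact ENNReal.ofReal_le_ofReal (inv_anti₀ (mul_pos hXN hc) (hle ω))
        · simp only [killedInv, Set.indicator_of_notMem hω, zero_le]
    _ = ∫⁻ ω, ∫⁻ s, H (Y ω) s ∂(μ.map (ξ (N + 1))) ∂μ :=
        lintegral_comp_eq_lintegral_lintegral_of_indepFun (hY.mono (Filtration.le _ N) le_rfl)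
          (hξ (N + 1)).measurable (hind.indepFun_succ_of_measurable_natural hξ hY) hH
    _ ≤ ∫⁻ ω, killedInv f δ X m N ω ∂μ := by
        refine lintegral_mono fun ω => ?_
        rw [lintegral_const_mul _ (by fun_prop),
          lintegral_map (by fun_prop) (hξ (N + 1)).measurable]
        by_cases hω : ω ∈ ⋂ n ∈ Finset.Icc m N, {ω | f (X n ω) ≤ δ}
        · exact mul_le_of_le_one_right' (hδ _ ⟨hf0 _, Set.mem_iInter₂.1 hω N
            (Finset.mem_Icc.2 ⟨hmN, le_rfl⟩)⟩)
        · simp only [Y, killedInv, Set.indicator_of_notMem hω, zero_mul, le_refl]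

theorem lintegral_killedInv_le (hind : iIndepFun ξ μ) (hf : Measurable f) (hf0 : ∀ x, 0 ≤ f x)
    (hX : ∀ n, Measurable[Filtration.natural ξ hξ n] (X n))
    (hδ : ∀ n, ∀ a ∈ Set.Icc 0 δ, ∫⁻ ω, ENNReal.ofReal (1 + a * ξ n ω)⁻¹ ∂μ ≤ 1)
    (hpos : ∀ᵐ ω ∂μ, ∀ n, 0 < X n ω ∧ 0 < 1 + f (X n ω) * ξ (n + 1) ω)
    (hle : ∀ n ω, X n ω * (1 + f (X n ω) * ξ (n + 1) ω) ≤ X (n + 1) ω) {m N : ℕ} (hmN : m ≤ N) :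
    ∫⁻ ω, killedInv f δ X m N ω ∂μ ≤ ∫⁻ ω, ENNReal.ofReal (X m ω)⁻¹ ∂μ := by
  induction N, hmN using Nat.le_induction with
  | base => exact lintegral_mono fun ω => Set.indicator_le_self _ _ ω
  | succ N hmN ih =>
    exact (lintegral_killedInv_succ_le hξ hind hf hf0 hX (hδ _) (hpos.mono fun ω h => h N)
      (hle N) hmN).trans ih

end Killed

theorem lintegral_ofReal_inv_ne_top_of_le {Ω : Type*} [MeasurableSpace Ω] {μ : Measure Ω}
    [IsFiniteMeasure μ] {Y : Ω → ℝ} {c : ℝ} (hc : 0 < c) (hY : ∀ᵐ ω ∂μ, c ≤ Y ω) :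
    ∫⁻ ω, ENNReal.ofReal (Y ω)⁻¹ ∂μ ≠ ∞ :=
  ne_top_of_le_ne_top (lintegral_const_lt_top (μ := μ) ENNReal.ofReal_ne_top).ne <|
    lintegral_mono_ae <| hY.mono fun _ h => ENNReal.ofReal_le_ofReal (inv_anti₀ hc h)

theorem ae_pos_of_eq_mul_one_add_add {Ω : Type*} [MeasurableSpace Ω] {μ : Measure Ω}
    {f : ℝ → ℝ} (hf : ∀ u, f u ∈ Set.Icc 0 1) {ξ : ℕ → Ω → ℝ}
    (hξ : ∀ᵐ ω ∂μ, ∀ n, -1 < ξ n ω) {S : ℕ → ℝ} (hS : ∀ n, 0 < S n) {X : ℕ → Ω → ℝ}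
    (hX0 : ∀ ω, 0 < X 0 ω)
    (hrec : ∀ n ω, X (n + 1) ω = X n ω * (1 + f (X n ω) * ξ (n + 1) ω) + S n) :
    ∀ᵐ ω ∂μ, ∀ n, 0 < X n ω ∧ 0 < 1 + f (X n ω) * ξ (n + 1) ω := by
  filter_upwards [hξ] with ω hω
  have hfac : ∀ n, 0 < 1 + f (X n ω) * ξ (n + 1) ω := fun n => by
    rcases le_or_gt 0 (ξ (n + 1) ω) with h | h <;>
      nlinarith [(hf (X n ω)).1, (hf (X n ω)).2, hω (n + 1)]
  refine fun n => ⟨?_, hfac n⟩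
  induction n with
  | zero => exact hX0 ω
  | succ n ih => rw [hrec]; exact add_pos (mul_pos ih (hfac n)) (hS n)

theorem nonlinear_positive_mean_divergence_general
    {Ω : Type*} [MeasurableSpace Ω] (μ : Measure Ω) [IsProbabilityMeasure μ]
    (f : ℝ → ℝ) (hf_cont : Continuous f) (hf_range : ∀ u, f u ∈ Set.Icc (0 : ℝ) 1)
    (hf_zero : ∀ u, f u = 0 ↔ u = 0)
    (ξ : ℕ → Ω → ℝ) (hξ_meas : ∀ n, Measurable (ξ n))
    (hξ_indep : iIndepFun ξ μ)
    (hξ_ident : ∀ n m, Measure.map (ξ n) μ = Measure.map (ξ m) μ)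
    (k₀ L : ℝ) (hk₀ : k₀ < 1)
    (hξ_bdd : ∀ n, ∀ᵐ ω ∂μ, -k₀ ≤ ξ n ω ∧ ξ n ω ≤ L)
    (hmean_pos : ∀ n, 0 < ∫ ω, ξ n ω ∂μ)
    (S : ℕ → ℝ) (hS : ∀ n, 0 < S n)
    (X : ℕ → Ω → ℝ) (X₀ : ℝ) (hX₀ : 0 < X₀) (hX0 : ∀ ω, X 0 ω = X₀)
    (hrec : ∀ n ω, X (n + 1) ω = X n ω * (1 + f (X n ω) * ξ (n + 1) ω) + S n) :
    μ {ω | Tendsto (fun n => X n ω) atTop (nhds 0)} = 0 := by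
  have hξs : ∀ n, StronglyMeasurable (ξ n) := fun n => (hξ_meas n).stronglyMeasurable
  obtain ⟨δ, hδ_pos, hδ⟩ := exists_lintegral_ofReal_inv_one_add_mul_le_one (hξ_meas 0)
    ((hξ_bdd 0).mono fun ω h => abs_le.2 ⟨by linarith [le_max_left k₀ L], h.2.trans
      (le_max_right k₀ L)⟩) (hmean_pos 0)
  have hδ_all : ∀ n, ∀ a ∈ Set.Icc 0 δ, ∫⁻ ω, ENNReal.ofReal (1 + a * ξ n ω)⁻¹ ∂μ ≤ 1 :=
    fun n a ha => by
      have hlaw : IdentDistrib (ξ n) (ξ 0) μ μ :=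
        ⟨(hξ_meas n).aemeasurable, (hξ_meas 0).aemeasurable, hξ_ident n 0⟩
      exact (hlaw.comp (u := fun s => ENNReal.ofReal (1 + a * s)⁻¹) (by fun_prop)
        ).lintegral_eq.trans_le (hδ a ha)
  have hX : ∀ n, Measurable[Filtration.natural ξ hξs n] (X n) :=
    measurable_natural_of_eq_succ hξs (Φ := fun n x s => x * (1 + f x * s) + S n)
      (fun n => by fun_prop) (by rw [funext hX0]; exact measurable_const) hrec
  have hpos := ae_pos_of_eq_mul_one_add_add hf_range
    (ae_all_iff.2 fun n => (hξ_bdd n).mono fun ω h => by linarith [h.1]) hS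
    (fun ω => hX0 ω ▸ hX₀) hrec
  have hinv : ∀ m, ∫⁻ ω, ENNReal.ofReal (X m ω)⁻¹ ∂μ ≠ ∞
    | 0 => lintegral_ofReal_inv_ne_top_of_le hX₀ (.of_forall fun ω => (hX0 ω).ge)
    | n + 1 => lintegral_ofReal_inv_ne_top_of_le (hS n) <| hpos.mono fun ω h => by
        rw [hrec]; linarith [mul_pos (h n).1 (h n).2]
  have hnull : ∀ m, μ {ω | Tendsto (fun N => killedInv f δ X m N ω) atTop (𝓝 ∞)} = 0 :=
    fun m => measure_setOf_tendsto_top_eq_zero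
      (fun N => (measurable_killedInv hf_cont.measurable hX m N).mono (Filtration.le _ N) le_rfl)
      (hinv m) <| eventually_atTop.2 ⟨m, fun N hN => lintegral_killedInv_le hξs hξ_indep
        hf_cont.measurable (fun x => (hf_range x).1) hX hδ_all hpos
        (fun n ω => by rw [hrec]; linarith [hS n]) hN⟩
  have hfδ : ∀ᶠ x in 𝓝 0, f x ≤ δ :=
    ((hf_zero 0).2 rfl ▸ hf_cont.tendsto 0).eventually (eventually_le_nhds hδ_pos)
  refine measure_mono_null_ae ?_ (measure_iUnion_null hnull)
  filter_upwards [hpos] with ω hω hX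
  exact Set.mem_iUnion.2 (tendsto_killedInv_of_tendsto_zero hX (fun n => (hω n).1) hfδ)

theorem nonlinear_positive_mean_divergence
    {Ω : Type*} [MeasurableSpace Ω] (μ : Measure Ω) [IsProbabilityMeasure μ]
    (f : ℝ → ℝ) (hf_cont : Continuous f) (hf_range : ∀ u, f u ∈ Set.Icc (0 : ℝ) 1)
    (hf_zero : ∀ u, f u = 0 ↔ u = 0)
    (ξ : ℕ → Ω → ℝ) (hξ_meas : ∀ n, Measurable (ξ n))
    (hξ_indep : iIndepFun ξ μ)
    (hξ_ident : ∀ n m, Measure.map (ξ n) μ = Measure.map (ξ m) μ)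
    (k₀ L : ℝ) (hk₀ : k₀ < 1)
    (hξ_bdd : ∀ n, ∀ᵐ ω ∂μ, -k₀ ≤ ξ n ω ∧ ξ n ω ≤ L)
    (hξ_int : ∀ n, Integrable (ξ n) μ)
    (hmean_pos : ∀ n, 0 < ∫ ω, ξ n ω ∂μ)
    (S : ℕ → ℝ) (hS : ∀ n, 0 < S n)
    (X : ℕ → Ω → ℝ) (X₀ : ℝ) (hX₀ : 0 < X₀) (hX0 : ∀ ω, X 0 ω = X₀)
    (hrec : ∀ n ω, X (n + 1) ω = X n ω * (1 + f (X n ω) * ξ (n + 1) ω) + S n) :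
    μ {ω | Tendsto (fun n => X n ω) atTop (nhds 0)} = 0 :=
  nonlinear_positive_mean_divergence_general μ f hf_cont hf_range hf_zero ξ hξ_meas hξ_indep
    hξ_ident k₀ L hk₀ hξ_bdd hmean_pos S hS X X₀ hX₀ hX0 hrec
end
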